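/- arXiv:2510.10829 — 4 statements merged into one kernel-verified Lean document; each statement's English description precedes it below -/
import Mathlib

section
/- Let L > 0 and β > 0, set μ = √(β/6), and let K(ξ,s) = (3/β)[sinh((L − ξ − s)/μ) + sign(ξ − s) sinh((L − |ξ − s|)/μ)]/sinh(L/μ) for ξ ≠ s. For a continuous function φ : [0, L] → ℝ, define Φ₂(φ)(ξ) = ∫₀ᴸ K(ξ, s) φ(s) ds. Then Φ₂(φ) is differentiable on (0, L), and for every ξ ∈ (0, L) its derivative is given by (Φ₂(φ))'(ξ) = (6/β) φ(ξ) + ∫₀ᴸ ∂K/∂ξ (ξ, s) φ(s) ds, where the jump term (6/β) φ(ξ) arises from the jump discontinuity of K across the diagonal s = ξ. -/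
open MeasureTheory intervalIntegral Set Filter

/-- Differentiation of `Φ₂(φ)(ξ) = ∫₀ᴸ K(ξ,s) φ(s) ds`: because of the jump of size
`6/β` of `K` across the diagonal, one has
`(Φ₂(φ))'(ξ) = (6/β) φ(ξ) + ∫₀ᴸ ∂K/∂ξ(ξ,s) φ(s) ds` for `ξ ∈ (0,L)`. -/
theorem Phi2_deriv_jump_formula
    (L β : ℝ) (hL : 0 < L) (hβ : 0 < β)
    (μ : ℝ) (hμ : μ = Real.sqrt (β / 6))
    (K : ℝ → ℝ → ℝ)
    (hK : ∀ ξ s : ℝ, ξ ≠ s → K ξ s =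
      (3 / β) * ((Real.sinh ((L - ξ - s) / μ) +
        Real.sign (ξ - s) * Real.sinh ((L - |ξ - s|) / μ)) / Real.sinh (L / μ)))
    (Kx : ℝ → ℝ → ℝ)
    (hKx : ∀ ξ ∈ Set.Icc (0 : ℝ) L, ∀ s ∈ Set.Icc (0 : ℝ) L, ξ ≠ s →
      HasDerivAt (fun x => K x s) (Kx ξ s) ξ)
    (φ : ℝ → ℝ) (hφ : ContinuousOn φ (Set.Icc (0 : ℝ) L)) :
    ∀ ξ ∈ Set.Ioo (0 : ℝ) L,
      HasDerivAt (fun x => ∫ s in (0 : ℝ)..L, K x s * φ s)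
        (6 / β * φ ξ + ∫ s in (0 : ℝ)..L, Kx ξ s * φ s) ξ := by
  intro ξ hξ
  obtain ⟨hξ0, hξL⟩ := hξ
  have hμpos : 0 < μ := by rw [hμ]; exact Real.sqrt_pos.mpr (by positivity)
  have hμne : μ ≠ 0 := ne_of_gt hμpos
  have hS : 0 < Real.sinh (L / μ) := Real.sinh_pos_iff.mpr (by positivity)
  have hβne : β ≠ 0 := ne_of_gt hβ
  set c : ℝ := 3 / β / Real.sinh (L / μ) with hc
  -- pointwise product formulas for K off the diagonal
  have hK1 : ∀ x s : ℝ, s < x →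
      K x s = 2 * c * (Real.sinh ((L - x) / μ) * Real.cosh (s / μ)) := by
    intro x s hsx
    rw [hK x s (ne_of_gt hsx), Real.sign_of_pos (by linarith : (0:ℝ) < x - s),
      abs_of_pos (by linarith : (0:ℝ) < x - s)]
    have e1 : (L - x - s) / μ = (L - x) / μ - s / μ := by ring
    have e2 : (L - (x - s)) / μ = (L - x) / μ + s / μ := by ring
    rw [e1, e2, Real.sinh_sub, Real.sinh_add, hc]
    field_simp
    ring
  have hK2 : ∀ x s : ℝ, x < s →
      K x s = -(2 * c) * (Real.sinh (x / μ) * Real.cosh ((L - s) / μ)) := by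
    intro x s hxs
    rw [hK x s (ne_of_lt hxs), Real.sign_of_neg (by linarith : x - s < 0),
      abs_of_neg (by linarith : x - s < 0)]
    have e1 : (L - x - s) / μ = (L - s) / μ - x / μ := by ring
    have e2 : (L - -(x - s)) / μ = (L - s) / μ + x / μ := by ring
    rw [e1, e2, Real.sinh_sub, Real.sinh_add, hc]
    field_simp
    ring
  -- continuity of the two basic integrands
  have hφc1 : ContinuousOn (fun s => Real.cosh (s / μ) * φ s) (Set.Icc 0 L) :=
    (Real.continuous_cosh.comp (continuous_id.div_const μ)).continuousOn.mul hφ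
  have hφc2 : ContinuousOn (fun s => Real.cosh ((L - s) / μ) * φ s) (Set.Icc 0 L) :=
    (Real.continuous_cosh.comp ((continuous_const.sub continuous_id).div_const μ)).continuousOn.mul hφ
  have hsub : ∀ a b : ℝ, a ∈ Set.Icc (0:ℝ) L → b ∈ Set.Icc (0:ℝ) L →
      Set.uIcc a b ⊆ Set.Icc (0:ℝ) L := fun a b ha hb => Set.uIcc_subset_Icc ha hb
  have h0L : (0:ℝ) ∈ Set.Icc (0:ℝ) L := ⟨le_rfl, hL.le⟩
  have hLL : L ∈ Set.Icc (0:ℝ) L := ⟨hL.le, le_rfl⟩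
  have hInt1 : ∀ a ∈ Set.Icc (0:ℝ) L, ∀ b ∈ Set.Icc (0:ℝ) L,
      IntervalIntegrable (fun s => Real.cosh (s / μ) * φ s) volume a b :=
    fun a ha b hb => (hφc1.mono (hsub a b ha hb)).intervalIntegrable
  have hInt2 : ∀ a ∈ Set.Icc (0:ℝ) L, ∀ b ∈ Set.Icc (0:ℝ) L,
      IntervalIntegrable (fun s => Real.cosh ((L - s) / μ) * φ s) volume a b :=
    fun a ha b hb => (hφc2.mono (hsub a b ha hb)).intervalIntegrable
  have hne : ∀ x : ℝ, ∀ᵐ s : ℝ, s ≠ x := fun x => by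
    simp [MeasureTheory.ae_iff]
  -- the integral equals an explicit smooth expression on (0, L)
  have hFsplit : ∀ x ∈ Set.Ioo (0:ℝ) L,
      (∫ s in (0:ℝ)..L, K x s * φ s) =
        2 * c * Real.sinh ((L - x) / μ) * (∫ s in (0:ℝ)..x, Real.cosh (s / μ) * φ s)
        - 2 * c * Real.sinh (x / μ) *
          ((∫ s in (0:ℝ)..L, Real.cosh ((L - s) / μ) * φ s)
            - ∫ s in (0:ℝ)..x, Real.cosh ((L - s) / μ) * φ s) := by
    intro x hx
    obtain ⟨hx0, hxL⟩ := hx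
    have hxI : x ∈ Set.Icc (0:ℝ) L := ⟨hx0.le, hxL.le⟩
    have e1 : (∫ s in (0:ℝ)..x, K x s * φ s)
        = ∫ s in (0:ℝ)..x, (2 * c * Real.sinh ((L - x) / μ)) * (Real.cosh (s / μ) * φ s) := by
      apply intervalIntegral.integral_congr_ae
      filter_upwards [hne x] with s hs hmem
      rw [Set.uIoc_of_le hx0.le] at hmem
      rw [hK1 x s (lt_of_le_of_ne hmem.2 hs)]; ring
    have e2 : (∫ s in x..L, K x s * φ s)
        = ∫ s in x..L, (-(2 * c) * Real.sinh (x / μ)) * (Real.cosh ((L - s) / μ) * φ s) := by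
      apply intervalIntegral.integral_congr_ae
      filter_upwards [] with s hmem
      rw [Set.uIoc_of_le hxL.le] at hmem
      rw [hK2 x s hmem.1]; ring
    have i1 : IntervalIntegrable (fun s => K x s * φ s) volume 0 x := by
      apply ((hInt1 0 h0L x hxI).const_mul (2 * c * Real.sinh ((L - x) / μ))).congr_ae
      filter_upwards [MeasureTheory.ae_restrict_mem measurableSet_uIoc,
        MeasureTheory.ae_restrict_of_ae (hne x)] with s hmem hs
      rw [Set.uIoc_of_le hx0.le] at hmem
      rw [hK1 x s (lt_of_le_of_ne hmem.2 hs)]; ring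
    have i2 : IntervalIntegrable (fun s => K x s * φ s) volume x L := by
      apply ((hInt2 x hxI L hLL).const_mul (-(2 * c) * Real.sinh (x / μ))).congr_ae
      filter_upwards [MeasureTheory.ae_restrict_mem measurableSet_uIoc] with s hmem
      rw [Set.uIoc_of_le hxL.le] at hmem
      rw [hK2 x s hmem.1]; ring
    have hadd2 : (∫ s in (0:ℝ)..x, Real.cosh ((L - s) / μ) * φ s)
        + (∫ s in x..L, Real.cosh ((L - s) / μ) * φ s)
        = ∫ s in (0:ℝ)..L, Real.cosh ((L - s) / μ) * φ s :=
      intervalIntegral.integral_add_adjacent_intervals (hInt2 0 h0L x hxI) (hInt2 x hxI L hLL)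
    rw [← intervalIntegral.integral_add_adjacent_intervals i1 i2, e1, e2,
      intervalIntegral.integral_const_mul, intervalIntegral.integral_const_mul, ← hadd2]
    ring
  -- derivatives of the building blocks
  have hξI : ξ ∈ Set.Icc (0:ℝ) L := ⟨hξ0.le, hξL.le⟩
  have hin1 : HasDerivAt (fun x : ℝ => (L - x) / μ) (-1 / μ) ξ :=
    ((hasDerivAt_id ξ).const_sub L).div_const μ
  have hin2 : HasDerivAt (fun x : ℝ => x / μ) (1 / μ) ξ := by
    simpa using (hasDerivAt_id ξ).div_const μ
  have hs1 : HasDerivAt (fun x => Real.sinh ((L - x) / μ))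
      (Real.cosh ((L - ξ) / μ) * (-1 / μ)) ξ :=
    by have := (Real.hasDerivAt_sinh ((L - ξ) / μ)).comp ξ hin1; exact this
  have hs2 : HasDerivAt (fun x => Real.sinh (x / μ)) (Real.cosh (ξ / μ) * (1 / μ)) ξ :=
    by have := (Real.hasDerivAt_sinh (ξ / μ)).comp ξ hin2; exact this
  have hUd : HasDerivAt (fun x => ∫ s in (0:ℝ)..x, Real.cosh (s / μ) * φ s)
      (Real.cosh (ξ / μ) * φ ξ) ξ :=
    intervalIntegral.integral_hasDerivAt_right (hInt1 0 h0L ξ hξI)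
      (ContinuousOn.stronglyMeasurableAtFilter isOpen_Ioo
        (hφc1.mono Set.Ioo_subset_Icc_self) ξ ⟨hξ0, hξL⟩)
      (hφc1.continuousAt (Icc_mem_nhds hξ0 hξL))
  have hU2d : HasDerivAt (fun x => ∫ s in (0:ℝ)..x, Real.cosh ((L - s) / μ) * φ s)
      (Real.cosh ((L - ξ) / μ) * φ ξ) ξ :=
    intervalIntegral.integral_hasDerivAt_right (hInt2 0 h0L ξ hξI)
      (ContinuousOn.stronglyMeasurableAtFilter isOpen_Ioo
        (hφc2.mono Set.Ioo_subset_Icc_self) ξ ⟨hξ0, hξL⟩)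
      (hφc2.continuousAt (Icc_mem_nhds hξ0 hξL))
  have hG : HasDerivAt (fun x =>
      2 * c * Real.sinh ((L - x) / μ) * (∫ s in (0:ℝ)..x, Real.cosh (s / μ) * φ s)
      - 2 * c * Real.sinh (x / μ) *
        ((∫ s in (0:ℝ)..L, Real.cosh ((L - s) / μ) * φ s)
          - ∫ s in (0:ℝ)..x, Real.cosh ((L - s) / μ) * φ s))
      (((2 * c) * (Real.cosh ((L - ξ) / μ) * (-1 / μ)))
          * (∫ s in (0:ℝ)..ξ, Real.cosh (s / μ) * φ s)
        + (2 * c * Real.sinh ((L - ξ) / μ)) * (Real.cosh (ξ / μ) * φ ξ)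
        - (((2 * c) * (Real.cosh (ξ / μ) * (1 / μ)))
            * ((∫ s in (0:ℝ)..L, Real.cosh ((L - s) / μ) * φ s)
              - ∫ s in (0:ℝ)..ξ, Real.cosh ((L - s) / μ) * φ s)
          + (2 * c * Real.sinh (ξ / μ)) * (-(Real.cosh ((L - ξ) / μ) * φ ξ)))) ξ :=
    ((hs1.const_mul (2 * c)).mul hUd).sub
      ((hs2.const_mul (2 * c)).mul
        (hU2d.const_sub (∫ s in (0:ℝ)..L, Real.cosh ((L - s) / μ) * φ s)))
  -- identify Kx off the diagonal
  have hKx1 : ∀ s : ℝ, 0 ≤ s → s < ξ →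
      Kx ξ s = (2 * c) * ((Real.cosh ((L - ξ) / μ) * (-1 / μ)) * Real.cosh (s / μ)) := by
    intro s hs0 hsξ
    have hde : HasDerivAt (fun x => 2 * c * (Real.sinh ((L - x) / μ) * Real.cosh (s / μ)))
        ((2 * c) * ((Real.cosh ((L - ξ) / μ) * (-1 / μ)) * Real.cosh (s / μ))) ξ :=
      (hs1.mul_const (Real.cosh (s / μ))).const_mul (2 * c)
    have heq : (fun x => K x s) =ᶠ[nhds ξ]
        (fun x => 2 * c * (Real.sinh ((L - x) / μ) * Real.cosh (s / μ))) := by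
      filter_upwards [Ioi_mem_nhds hsξ] with x hx
      exact hK1 x s hx
    exact (hKx ξ hξI s ⟨hs0, le_trans hsξ.le hξL.le⟩ (ne_of_gt hsξ)).unique
      (hde.congr_of_eventuallyEq heq)
  have hKx2 : ∀ s : ℝ, ξ < s → s ≤ L →
      Kx ξ s = (-(2 * c)) * ((Real.cosh (ξ / μ) * (1 / μ)) * Real.cosh ((L - s) / μ)) := by
    intro s hsξ hsL
    have hde : HasDerivAt (fun x => -(2 * c) * (Real.sinh (x / μ) * Real.cosh ((L - s) / μ)))
        ((-(2 * c)) * ((Real.cosh (ξ / μ) * (1 / μ)) * Real.cosh ((L - s) / μ))) ξ :=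
      (hs2.mul_const (Real.cosh ((L - s) / μ))).const_mul (-(2 * c))
    have heq : (fun x => K x s) =ᶠ[nhds ξ]
        (fun x => -(2 * c) * (Real.sinh (x / μ) * Real.cosh ((L - s) / μ))) := by
      filter_upwards [Iio_mem_nhds hsξ] with x hx
      exact hK2 x s hx
    exact (hKx ξ hξI s ⟨le_trans hξ0.le hsξ.le, hsL⟩ (ne_of_lt hsξ)).unique
      (hde.congr_of_eventuallyEq heq)
  -- compute the integral of Kx
  have j1 : (∫ s in (0:ℝ)..ξ, Kx ξ s * φ s)
      = ((2 * c) * (Real.cosh ((L - ξ) / μ) * (-1 / μ)))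
        * ∫ s in (0:ℝ)..ξ, Real.cosh (s / μ) * φ s := by
    rw [← intervalIntegral.integral_const_mul]
    apply intervalIntegral.integral_congr_ae
    filter_upwards [hne ξ] with s hs hmem
    rw [Set.uIoc_of_le hξ0.le] at hmem
    rw [hKx1 s hmem.1.le (lt_of_le_of_ne hmem.2 hs)]; ring
  have j2 : (∫ s in ξ..L, Kx ξ s * φ s)
      = ((-(2 * c)) * (Real.cosh (ξ / μ) * (1 / μ)))
        * ∫ s in ξ..L, Real.cosh ((L - s) / μ) * φ s := by
    rw [← intervalIntegral.integral_const_mul]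
    apply intervalIntegral.integral_congr_ae
    filter_upwards [] with s hmem
    rw [Set.uIoc_of_le hξL.le] at hmem
    rw [hKx2 s hmem.1 hmem.2]; ring
  have jint1 : IntervalIntegrable (fun s => Kx ξ s * φ s) volume 0 ξ := by
    apply ((hInt1 0 h0L ξ hξI).const_mul
      ((2 * c) * (Real.cosh ((L - ξ) / μ) * (-1 / μ)))).congr_ae
    filter_upwards [MeasureTheory.ae_restrict_mem measurableSet_uIoc,
      MeasureTheory.ae_restrict_of_ae (hne ξ)] with s hmem hs
    rw [Set.uIoc_of_le hξ0.le] at hmem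
    rw [hKx1 s hmem.1.le (lt_of_le_of_ne hmem.2 hs)]; ring
  have jint2 : IntervalIntegrable (fun s => Kx ξ s * φ s) volume ξ L := by
    apply ((hInt2 ξ hξI L hLL).const_mul
      ((-(2 * c)) * (Real.cosh (ξ / μ) * (1 / μ)))).congr_ae
    filter_upwards [MeasureTheory.ae_restrict_mem measurableSet_uIoc] with s hmem
    rw [Set.uIoc_of_le hξL.le] at hmem
    rw [hKx2 s hmem.1 hmem.2]; ring
  have hadd2 : (∫ s in (0:ℝ)..ξ, Real.cosh ((L - s) / μ) * φ s)
      + (∫ s in ξ..L, Real.cosh ((L - s) / μ) * φ s)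
      = ∫ s in (0:ℝ)..L, Real.cosh ((L - s) / μ) * φ s :=
    intervalIntegral.integral_add_adjacent_intervals (hInt2 0 h0L ξ hξI) (hInt2 ξ hξI L hLL)
  have jsum : (∫ s in (0:ℝ)..L, Kx ξ s * φ s)
      = ((2 * c) * (Real.cosh ((L - ξ) / μ) * (-1 / μ)))
          * (∫ s in (0:ℝ)..ξ, Real.cosh (s / μ) * φ s)
        + ((-(2 * c)) * (Real.cosh (ξ / μ) * (1 / μ)))
          * ((∫ s in (0:ℝ)..L, Real.cosh ((L - s) / μ) * φ s)
            - ∫ s in (0:ℝ)..ξ, Real.cosh ((L - s) / μ) * φ s) := by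
    rw [← intervalIntegral.integral_add_adjacent_intervals jint1 jint2, j1, j2, ← hadd2]
    ring
  -- trig jump identity
  have hsum : Real.sinh ((L - ξ) / μ) * Real.cosh (ξ / μ)
      + Real.cosh ((L - ξ) / μ) * Real.sinh (ξ / μ) = Real.sinh (L / μ) := by
    rw [← Real.sinh_add, show (L - ξ) / μ + ξ / μ = L / μ from by ring]
  have h6 : 2 * c * Real.sinh (L / μ) = 6 / β := by
    rw [hc]; field_simp; ring
  -- conclude
  have hFG : (fun x => ∫ s in (0:ℝ)..L, K x s * φ s) =ᶠ[nhds ξ]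
      (fun x =>
        2 * c * Real.sinh ((L - x) / μ) * (∫ s in (0:ℝ)..x, Real.cosh (s / μ) * φ s)
        - 2 * c * Real.sinh (x / μ) *
          ((∫ s in (0:ℝ)..L, Real.cosh ((L - s) / μ) * φ s)
            - ∫ s in (0:ℝ)..x, Real.cosh ((L - s) / μ) * φ s)) :=
    Filter.eventuallyEq_of_mem (Ioo_mem_nhds hξ0 hξL) hFsplit
  have hmain := hG.congr_of_eventuallyEq hFG
  have hval : (((2 * c) * (Real.cosh ((L - ξ) / μ) * (-1 / μ)))
          * (∫ s in (0:ℝ)..ξ, Real.cosh (s / μ) * φ s)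
        + (2 * c * Real.sinh ((L - ξ) / μ)) * (Real.cosh (ξ / μ) * φ ξ)
        - (((2 * c) * (Real.cosh (ξ / μ) * (1 / μ)))
            * ((∫ s in (0:ℝ)..L, Real.cosh ((L - s) / μ) * φ s)
              - ∫ s in (0:ℝ)..ξ, Real.cosh ((L - s) / μ) * φ s)
          + (2 * c * Real.sinh (ξ / μ)) * (-(Real.cosh ((L - ξ) / μ) * φ ξ))))
      = 6 / β * φ ξ + ∫ s in (0:ℝ)..L, Kx ξ s * φ s := by
    rw [jsum, ← h6]
    linear_combination (φ ξ) * (2 * c) * hsum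
  rwa [hval] at hmain
end

section
/- Let L > 0 and β > 0, set μ = √(β/6), let G(ξ,s) = [cosh((L − |s − ξ|)/μ) − cosh((L − (ξ + s))/μ)] / (2 μ sinh(L/μ)), and let K(ξ,s) = (3/β)[sinh((L − ξ − s)/μ) + sign(ξ − s) sinh((L − |ξ − s|)/μ)]/sinh(L/μ) for ξ ≠ s. Define Φ₁(φ)(ξ) = ∫₀ᴸ G(ξ,s) φ(s) ds and Φ₂(φ)(ξ) = ∫₀ᴸ K(ξ,s) φ(s) ds. Then there exist positive constants C₁ and C₂ such that for every continuous function φ : [0, L] → ℝ, ( ∫₀ᴸ (Φ₁(φ)(ξ))² dξ + (β/6) ∫₀ᴸ ((Φ₁(φ))'(ξ))² dξ )^{1/2} ≤ C₁ ( ∫₀ᴸ φ² )^{1/2} and ( ∫₀ᴸ (Φ₂(φ)(ξ))² dξ + (β/6) ∫₀ᴸ ((Φ₂(φ))'(ξ))² dξ )^{1/2} ≤ C₂ ( ∫₀ᴸ φ² )^{1/2}; that is, Φ₁ and Φ₂ are bounded linear operators from L²([0,L]) into the Sobolev space H¹ equipped with the weighted norm ‖f‖_{H¹} = ( ‖f‖²_{L²}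 + (β/6) ‖f'‖²_{L²} )^{1/2}. -/
open MeasureTheory Set intervalIntegral Filter

private lemma cs_bound' (L : ℝ) (hL : 0 < L) (φ : ℝ → ℝ)
    (hφ : ContinuousOn φ (Set.Icc 0 L)) :
    (∫ s in (0:ℝ)..L, |φ s|) ≤ Real.sqrt L * Real.sqrt (∫ s in (0:ℝ)..L, φ s ^ 2) := by
  set N := Real.sqrt (∫ s in (0:ℝ)..L, φ s ^ 2) with hNdef
  have hint2 : IntervalIntegrable (fun s => φ s ^ 2) volume 0 L := by
    apply ContinuousOn.intervalIntegrable
    rw [Set.uIcc_of_le hL.le]; exact hφ.pow 2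
  have hintabs : IntervalIntegrable (fun s => |φ s|) volume 0 L := by
    apply ContinuousOn.intervalIntegrable
    rw [Set.uIcc_of_le hL.le]; exact hφ.abs
  have hnn : (0:ℝ) ≤ ∫ s in (0:ℝ)..L, φ s ^ 2 :=
    intervalIntegral.integral_nonneg hL.le (fun u _ => sq_nonneg _)
  have hN2 : N ^ 2 = ∫ s in (0:ℝ)..L, φ s ^ 2 := Real.sq_sqrt hnn
  have hNnn : 0 ≤ N := Real.sqrt_nonneg _
  by_cases hN : N = 0
  · have h0 : (∫ s in (0:ℝ)..L, φ s ^ 2) = 0 := by rw [← hN2, hN]; ring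
    rw [intervalIntegral.integral_of_le hL.le] at h0 ⊢
    have h0' : (fun s => φ s ^ 2) =ᵐ[volume.restrict (Set.Ioc 0 L)] 0 := by
      refine (integral_eq_zero_iff_of_nonneg (fun s => sq_nonneg _) ?_).1 h0
      exact (intervalIntegrable_iff_integrableOn_Ioc_of_le hL.le).1 hint2
    have habs : (fun s => |φ s|) =ᵐ[volume.restrict (Set.Ioc 0 L)] 0 := by
      refine h0'.mono fun s hs => ?_
      simp only [Pi.zero_apply] at hs ⊢
      have : φ s = 0 := by nlinarith [sq_abs (φ s), abs_nonneg (φ s)]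
      simp [this]
    rw [MeasureTheory.integral_congr_ae habs]
    simp [hN]
  · have hNpos : 0 < N := lt_of_le_of_ne hNnn (Ne.symm hN)
    have hsL : Real.sqrt L ^ 2 = L := Real.sq_sqrt hL.le
    have hsL0 : 0 < Real.sqrt L := Real.sqrt_pos.2 hL
    set t := N / Real.sqrt L with htdef
    have ht : 0 < t := div_pos hNpos hsL0
    set c := 1 / (2 * t) with hcdef
    have hc : 0 < c := by positivity
    have hptwise : ∀ s ∈ Set.Icc (0:ℝ) L, |φ s| ≤ c * φ s ^ 2 + t / 2 := by
      intro s _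
      have h1 : 0 ≤ (|φ s| - t)^2 := sq_nonneg _
      have h2 : |φ s|^2 = φ s ^2 := sq_abs _
      have h3 : c * (2*t) = 1 := by rw [hcdef]; field_simp
      nlinarith [h1, h2, h3, ht, hc, sq_nonneg (φ s)]
    have hmono := intervalIntegral.integral_mono_on hL.le hintabs
      ((hint2.const_mul c).add (_root_.intervalIntegrable_const (c := t/2))) hptwise
    have hcomp : (∫ s in (0:ℝ)..L, (c * φ s ^ 2 + t / 2)) = c * N ^ 2 + L * (t / 2) := by
      rw [intervalIntegral.integral_add (hint2.const_mul c) (_root_.intervalIntegrable_const (c := t/2)),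
        intervalIntegral.integral_const_mul, intervalIntegral.integral_const, hN2]
      simp only [smul_eq_mul, sub_zero]
    have hfinal : c * N ^ 2 + L * (t / 2) = Real.sqrt L * N := by
      rw [hcdef, htdef]
      field_simp
      nlinarith [hsL]
    calc (∫ s in (0:ℝ)..L, |φ s|) ≤ _ := hmono
      _ = c * N ^ 2 + L * (t/2) := hcomp
      _ = Real.sqrt L * N := hfinal

private lemma aux_bound (L β μ : ℝ) (hL : 0 < L) (hβ : 0 < β) (hμ : 0 < μ)
    (φ : ℝ → ℝ) (hφ : ContinuousOn φ (Set.Icc 0 L))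
    (k : ℝ → ℝ → ℝ) (a₁ a₂ b₁ b₂ a₁' a₂' b₁' b₂' : ℝ → ℝ)
    (U : ℝ) (hU : 0 < U)
    (hk₁ : ∀ x ∈ Set.Ioo (0:ℝ) L, ∀ s ∈ Set.Icc (0:ℝ) L, s < x →
      k x s = a₁ x * Real.cosh (s/μ) + a₂ x * Real.sinh (s/μ))
    (hk₂ : ∀ x ∈ Set.Ioo (0:ℝ) L, ∀ s ∈ Set.Icc (0:ℝ) L, x < s →
      k x s = b₁ x * Real.cosh (s/μ) + b₂ x * Real.sinh (s/μ))
    (hd : ∀ x ∈ Set.Ioo (0:ℝ) L, HasDerivAt a₁ (a₁' x) x ∧ HasDerivAt a₂ (a₂' x) x ∧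
      HasDerivAt b₁ (b₁' x) x ∧ HasDerivAt b₂ (b₂' x) x)
    (hbd : ∀ x ∈ Set.Ioo (0:ℝ) L, |a₁ x| ≤ U ∧ |a₂ x| ≤ U ∧ |b₁ x| ≤ U ∧ |b₂ x| ≤ U ∧
      |a₁' x| ≤ U ∧ |a₂' x| ≤ U ∧ |b₁' x| ≤ U ∧ |b₂' x| ≤ U) :
    Real.sqrt ((∫ ξ in (0:ℝ)..L, (∫ s in (0:ℝ)..L, k ξ s * φ s) ^ 2) +
        β / 6 * ∫ ξ in (0:ℝ)..L, (deriv (fun x => ∫ s in (0:ℝ)..L, k x s * φ s) ξ) ^ 2) ≤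
      Real.sqrt ((6*U*Real.cosh (L/μ))^2 * L^2 +
        β/6 * (2*(6*U*Real.cosh (L/μ))^2 * L^2 + 2*(6*U*Real.cosh (L/μ))^2)) *
      Real.sqrt (∫ s in (0:ℝ)..L, φ s ^ 2) := by
  set f : ℝ → ℝ := fun x => ∫ s in (0:ℝ)..L, k x s * φ s with hfdef
  set N : ℝ := Real.sqrt (∫ s in (0:ℝ)..L, φ s ^ 2) with hNdef
  set CR : ℝ := Real.cosh (L/μ) with hCRdef
  set E : ℝ := 6*U*CR with hEdef
  clear_value f N
  have hCR1 : 1 ≤ CR := by rw [hCRdef]; exact Real.one_le_cosh _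
  have hCR0 : 0 < CR := lt_of_lt_of_le one_pos hCR1
  have hE0 : 0 < E := by rw [hEdef]; positivity
  clear_value E
  -- basic integrability of φ and friends
  have hint2 : IntervalIntegrable (fun s => φ s ^ 2) volume 0 L := by
    apply ContinuousOn.intervalIntegrable
    rw [Set.uIcc_of_le hL.le]; exact hφ.pow 2
  have hnn : (0:ℝ) ≤ ∫ s in (0:ℝ)..L, φ s ^ 2 :=
    intervalIntegral.integral_nonneg hL.le (fun u _ => sq_nonneg _)
  have hN2 : N ^ 2 = ∫ s in (0:ℝ)..L, φ s ^ 2 := by rw [hNdef]; exact Real.sq_sqrt hnn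
  have hNnn : 0 ≤ N := by rw [hNdef]; exact Real.sqrt_nonneg _
  set IL : ℝ := ∫ s in (0:ℝ)..L, |φ s| with hILdef
  clear_value IL
  have hILnn : 0 ≤ IL := by
    rw [hILdef]; exact intervalIntegral.integral_nonneg hL.le (fun u _ => abs_nonneg _)
  have hIL : IL ≤ Real.sqrt L * N := by rw [hILdef, hNdef]; exact cs_bound' L hL φ hφ
  have hILsq : IL^2 ≤ L * N^2 := by
    have h1 : IL^2 ≤ (Real.sqrt L * N)^2 := by
      apply pow_le_pow_left₀ hILnn hIL
    calc IL^2 ≤ (Real.sqrt L * N)^2 := h1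
      _ = L * N^2 := by rw [mul_pow, Real.sq_sqrt hL.le]
  -- continuity of kernels in s
  have hccont : ContinuousOn (fun s => Real.cosh (s/μ) * φ s) (Set.Icc 0 L) :=
    ((Real.continuous_cosh.comp (continuous_id.div_const μ)).continuousOn).mul hφ
  have hsncont : ContinuousOn (fun s => Real.sinh (s/μ) * φ s) (Set.Icc 0 L) :=
    ((Real.continuous_sinh.comp (continuous_id.div_const μ)).continuousOn).mul hφ
  -- generic integrability on subintervals
  have hmono_int : ∀ (g : ℝ → ℝ), ContinuousOn g (Set.Icc 0 L) → ∀ x ∈ Set.Icc (0:ℝ) L,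
      IntervalIntegrable g volume 0 x := by
    intro g hg x hx
    refine (hg.mono ?_).intervalIntegrable
    rw [Set.uIcc_of_le hx.1]; exact Set.Icc_subset_Icc le_rfl hx.2
  have hmono_int' : ∀ (g : ℝ → ℝ), ContinuousOn g (Set.Icc 0 L) → ∀ x ∈ Set.Icc (0:ℝ) L,
      IntervalIntegrable g volume x L := by
    intro g hg x hx
    refine (hg.mono ?_).intervalIntegrable
    rw [Set.uIcc_of_le hx.2]; exact Set.Icc_subset_Icc hx.1 le_rfl
  have habscont : ContinuousOn (fun s => |φ s|) (Set.Icc 0 L) := hφ.abs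
  -- bounds on cosh/sinh at points of [0,L]
  have hcb : ∀ s ∈ Set.Icc (0:ℝ) L, |Real.cosh (s/μ)| ≤ CR := by
    intro s hs
    rw [abs_of_pos (Real.cosh_pos _), hCRdef, Real.cosh_le_cosh,
      abs_of_nonneg (div_nonneg hs.1 hμ.le), abs_of_nonneg (div_nonneg hL.le hμ.le)]
    exact (div_le_div_iff_of_pos_right hμ).2 hs.2
  have hsb : ∀ s ∈ Set.Icc (0:ℝ) L, |Real.sinh (s/μ)| ≤ CR := by
    intro s hs
    have h1 : |Real.sinh (s/μ)| = Real.sinh |s/μ| := (Real.abs_sinh _).symm ▸ rfl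
    calc |Real.sinh (s/μ)| = Real.sinh |s/μ| := by rw [Real.abs_sinh]
      _ ≤ Real.cosh |s/μ| := (Real.sinh_lt_cosh _).le
      _ = Real.cosh (s/μ) := Real.cosh_abs _
      _ ≤ CR := by
          have := hcb s hs
          rwa [abs_of_pos (Real.cosh_pos _)] at this
  -- the estimate |∫ g| ≤ CR * IL for kernels bounded by CR * |φ|
  have hest : ∀ (g : ℝ → ℝ), ContinuousOn g (Set.Icc 0 L) →
      (∀ s ∈ Set.Icc (0:ℝ) L, |g s| ≤ CR * |φ s|) →
      ∀ x ∈ Set.Icc (0:ℝ) L, |∫ s in (0:ℝ)..x, g s| ≤ CR * IL := by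
    intro g hg hgb x hx
    have h1 : |∫ s in (0:ℝ)..x, g s| ≤ ∫ s in (0:ℝ)..x, |g s| :=
      intervalIntegral.abs_integral_le_integral_abs hx.1
    have h2 : (∫ s in (0:ℝ)..x, |g s|) ≤ ∫ s in (0:ℝ)..x, CR * |φ s| := by
      apply intervalIntegral.integral_mono_on hx.1 ((hmono_int g hg x hx).abs)
        ((hmono_int _ habscont x hx).const_mul CR)
      intro s hs
      exact hgb s ⟨hs.1, hs.2.trans hx.2⟩
    have h3 : (∫ s in (0:ℝ)..x, CR * |φ s|) ≤ ∫ s in (0:ℝ)..L, CR * |φ s| := by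
      apply intervalIntegral.integral_mono_interval le_rfl hx.1 hx.2
      · filter_upwards with s; positivity
      · exact (hmono_int _ habscont L ⟨hL.le, le_rfl⟩).const_mul CR
    have h5 : (∫ s in (0:ℝ)..L, CR * |φ s|) = CR * IL := by
      rw [hILdef, intervalIntegral.integral_const_mul]
    linarith
  -- P and Q
  set P : ℝ → ℝ := fun x => ∫ s in (0:ℝ)..x, Real.cosh (s/μ) * φ s with hPdef
  set Q : ℝ → ℝ := fun x => ∫ s in (0:ℝ)..x, Real.sinh (s/μ) * φ s with hQdef
  clear_value P Q
  have hPbound : ∀ x ∈ Set.Icc (0:ℝ) L, |P x| ≤ CR * IL := by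
    intro x hx
    simp only [hPdef]
    refine hest _ hccont (fun s hs => ?_) x hx
    rw [abs_mul]
    exact mul_le_mul_of_nonneg_right (hcb s hs) (abs_nonneg _)
  have hQbound : ∀ x ∈ Set.Icc (0:ℝ) L, |Q x| ≤ CR * IL := by
    intro x hx
    simp only [hQdef]
    refine hest _ hsncont (fun s hs => ?_) x hx
    rw [abs_mul]
    exact mul_le_mul_of_nonneg_right (hsb s hs) (abs_nonneg _)
  have hLmem : L ∈ Set.Icc (0:ℝ) L := ⟨hL.le, le_rfl⟩
  have hPd : ∀ x ∈ Set.Ioo (0:ℝ) L, HasDerivAt P (Real.cosh (x/μ) * φ x) x := by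
    intro x hx
    simp only [hPdef]
    refine intervalIntegral.integral_hasDerivAt_right
      (hmono_int _ hccont x ⟨hx.1.le, hx.2.le⟩) ?_ ?_
    · exact ContinuousOn.stronglyMeasurableAtFilter isOpen_Ioo
        (hccont.mono Set.Ioo_subset_Icc_self) x hx
    · exact hccont.continuousAt (Icc_mem_nhds hx.1 hx.2)
  have hQd : ∀ x ∈ Set.Ioo (0:ℝ) L, HasDerivAt Q (Real.sinh (x/μ) * φ x) x := by
    intro x hx
    simp only [hQdef]
    refine intervalIntegral.integral_hasDerivAt_right
      (hmono_int _ hsncont x ⟨hx.1.le, hx.2.le⟩) ?_ ?_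
    · exact ContinuousOn.stronglyMeasurableAtFilter isOpen_Ioo
        (hsncont.mono Set.Ioo_subset_Icc_self) x hx
    · exact hsncont.continuousAt (Icc_mem_nhds hx.1 hx.2)
  -- representation
  set F : ℝ → ℝ := fun x => a₁ x * P x + a₂ x * Q x + b₁ x * (P L - P x) + b₂ x * (Q L - Q x)
    with hFdef
  clear_value F
  have hrep : ∀ x ∈ Set.Ioo (0:ℝ) L, f x = F x := by
    intro x hx
    have hx0 : (0:ℝ) ≤ x := hx.1.le
    have hxL : x ≤ L := hx.2.le
    have hxi : x ∈ Set.Icc (0:ℝ) L := ⟨hx0, hxL⟩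
    have h₁c : ContinuousOn (fun s => a₁ x * (Real.cosh (s/μ) * φ s) +
        a₂ x * (Real.sinh (s/μ) * φ s)) (Set.Icc 0 L) :=
      (continuousOn_const.mul hccont).add (continuousOn_const.mul hsncont)
    have h₂c : ContinuousOn (fun s => b₁ x * (Real.cosh (s/μ) * φ s) +
        b₂ x * (Real.sinh (s/μ) * φ s)) (Set.Icc 0 L) :=
      (continuousOn_const.mul hccont).add (continuousOn_const.mul hsncont)
    have hae₁ : ∀ᵐ s ∂(volume.restrict (Set.Ioc 0 x)), k x s * φ s =
        a₁ x * (Real.cosh (s/μ) * φ s) + a₂ x * (Real.sinh (s/μ) * φ s) := by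
      rw [← Measure.restrict_congr_set Ioo_ae_eq_Ioc]
      filter_upwards [ae_restrict_mem measurableSet_Ioo] with s hs
      rw [hk₁ x hx s ⟨hs.1.le, hs.2.le.trans hxL⟩ hs.2]; ring
    have hae₂ : ∀ᵐ s ∂(volume.restrict (Set.Ioc x L)), k x s * φ s =
        b₁ x * (Real.cosh (s/μ) * φ s) + b₂ x * (Real.sinh (s/μ) * φ s) := by
      filter_upwards [ae_restrict_mem measurableSet_Ioc] with s hs
      rw [hk₂ x hx s ⟨hx0.trans hs.1.le, hs.2⟩ hs.1]; ring
    have ih₁ : IntervalIntegrable (fun s => a₁ x * (Real.cosh (s/μ) * φ s) +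
        a₂ x * (Real.sinh (s/μ) * φ s)) volume 0 x := hmono_int _ h₁c x hxi
    have ih₂ : IntervalIntegrable (fun s => b₁ x * (Real.cosh (s/μ) * φ s) +
        b₂ x * (Real.sinh (s/μ) * φ s)) volume x L := hmono_int' _ h₂c x hxi
    have ik₁ : IntervalIntegrable (fun s => k x s * φ s) volume 0 x := by
      rw [intervalIntegrable_iff_integrableOn_Ioc_of_le hx0]
      exact (((intervalIntegrable_iff_integrableOn_Ioc_of_le hx0).1 ih₁).congr (hae₁.mono fun s hs => hs.symm))
    have ik₂ : IntervalIntegrable (fun s => k x s * φ s) volume x L := by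
      rw [intervalIntegrable_iff_integrableOn_Ioc_of_le hxL]
      exact (((intervalIntegrable_iff_integrableOn_Ioc_of_le hxL).1 ih₂).congr (hae₂.mono fun s hs => hs.symm))
    have hsplit : f x = (∫ s in (0:ℝ)..x, k x s * φ s) + ∫ s in x..L, k x s * φ s := by
      simp only [hfdef]
      exact (integral_add_adjacent_intervals ik₁ ik₂).symm
    have e₁ : (∫ s in (0:ℝ)..x, k x s * φ s) = a₁ x * P x + a₂ x * Q x := by
      rw [intervalIntegral.integral_of_le hx0, MeasureTheory.integral_congr_ae hae₁,
        ← intervalIntegral.integral_of_le hx0,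
        intervalIntegral.integral_add ((hmono_int _ hccont x hxi).const_mul _)
          ((hmono_int _ hsncont x hxi).const_mul _),
        intervalIntegral.integral_const_mul, intervalIntegral.integral_const_mul,
        hPdef, hQdef]
    have hPL : (∫ s in x..L, Real.cosh (s/μ) * φ s) = P L - P x := by
      have h := integral_add_adjacent_intervals (hmono_int _ hccont x hxi)
        (hmono_int' _ hccont x hxi)
      simp only [hPdef]
      linarith
    have hQL : (∫ s in x..L, Real.sinh (s/μ) * φ s) = Q L - Q x := by
      have h := integral_add_adjacent_intervals (hmono_int _ hsncont x hxi)
        (hmono_int' _ hsncont x hxi)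
      simp only [hQdef]
      linarith
    have e₂ : (∫ s in x..L, k x s * φ s) = b₁ x * (P L - P x) + b₂ x * (Q L - Q x) := by
      rw [intervalIntegral.integral_of_le hxL, MeasureTheory.integral_congr_ae hae₂,
        ← intervalIntegral.integral_of_le hxL,
        intervalIntegral.integral_add ((hmono_int' _ hccont x hxi).const_mul _)
          ((hmono_int' _ hsncont x hxi).const_mul _),
        intervalIntegral.integral_const_mul, intervalIntegral.integral_const_mul, hPL, hQL]
    rw [hsplit, e₁, e₂]; simp only [hFdef]; ring
  -- derivative of F
  set D : ℝ → ℝ := fun ξ =>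
    (a₁' ξ * P ξ + a₁ ξ * (Real.cosh (ξ/μ) * φ ξ)) +
    (a₂' ξ * Q ξ + a₂ ξ * (Real.sinh (ξ/μ) * φ ξ)) +
    (b₁' ξ * (P L - P ξ) + b₁ ξ * (0 - Real.cosh (ξ/μ) * φ ξ)) +
    (b₂' ξ * (Q L - Q ξ) + b₂ ξ * (0 - Real.sinh (ξ/μ) * φ ξ)) with hDdef
  clear_value D
  have hFd : ∀ ξ ∈ Set.Ioo (0:ℝ) L, HasDerivAt F (D ξ) ξ := by
    intro ξ hξ
    obtain ⟨hda₁, hda₂, hdb₁, hdb₂⟩ := hd ξ hξ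
    rw [hFdef, hDdef]
    exact (((hda₁.mul (hPd ξ hξ)).add (hda₂.mul (hQd ξ hξ))).add
      (hdb₁.mul ((hasDerivAt_const ξ (P L)).sub (hPd ξ hξ)))).add
      (hdb₂.mul ((hasDerivAt_const ξ (Q L)).sub (hQd ξ hξ)))
  have hderiv_eq : ∀ ξ ∈ Set.Ioo (0:ℝ) L, deriv f ξ = D ξ := by
    intro ξ hξ
    have hev : f =ᶠ[nhds ξ] F :=
      Filter.eventually_of_mem (Ioo_mem_nhds hξ.1 hξ.2) (fun x hx => hrep x hx)
    rw [hev.deriv_eq]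
    exact (hFd ξ hξ).deriv
  -- pointwise bounds
  have hFb : ∀ x ∈ Set.Ioo (0:ℝ) L, |F x| ≤ E * IL := by
    intro x hx
    obtain ⟨hA1, hA2, hB1, hB2, _, _, _, _⟩ := hbd x hx
    have hxi : x ∈ Set.Icc (0:ℝ) L := ⟨hx.1.le, hx.2.le⟩
    have hp := hPbound x hxi
    have hq := hQbound x hxi
    have hpl := hPbound L hLmem
    have hql := hQbound L hLmem
    have hplx : |P L - P x| ≤ 2 * (CR * IL) := by
      calc |P L - P x| ≤ |P L| + |P x| := by
            rw [sub_eq_add_neg]; exact (abs_add_le _ _).trans (by rw [abs_neg])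
        _ ≤ 2 * (CR * IL) := by linarith
    have hqlx : |Q L - Q x| ≤ 2 * (CR * IL) := by
      calc |Q L - Q x| ≤ |Q L| + |Q x| := by
            rw [sub_eq_add_neg]; exact (abs_add_le _ _).trans (by rw [abs_neg])
        _ ≤ 2 * (CR * IL) := by linarith
    have h1 : |a₁ x * P x| ≤ U * (CR * IL) := by
      rw [abs_mul]; exact mul_le_mul hA1 hp (abs_nonneg _) hU.le
    have h2 : |a₂ x * Q x| ≤ U * (CR * IL) := by
      rw [abs_mul]; exact mul_le_mul hA2 hq (abs_nonneg _) hU.le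
    have h3 : |b₁ x * (P L - P x)| ≤ U * (2 * (CR * IL)) := by
      rw [abs_mul]; exact mul_le_mul hB1 hplx (abs_nonneg _) hU.le
    have h4 : |b₂ x * (Q L - Q x)| ≤ U * (2 * (CR * IL)) := by
      rw [abs_mul]; exact mul_le_mul hB2 hqlx (abs_nonneg _) hU.le
    have habs : |F x| ≤ |a₁ x * P x| + |a₂ x * Q x| + |b₁ x * (P L - P x)| +
        |b₂ x * (Q L - Q x)| := by
      simp only [hFdef]
      exact (abs_add_le _ _).trans (add_le_add_left ((abs_add_le _ _).trans
        (add_le_add_left (abs_add_le _ _) _)) _)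
    rw [(by rw [hEdef] : E * IL = 6 * U * CR * IL)]
    linarith [habs, h1, h2, h3, h4]
  have hDb : ∀ ξ ∈ Set.Ioo (0:ℝ) L, |D ξ| ≤ E * IL + E * |φ ξ| := by
    intro x hx
    obtain ⟨hA1, hA2, hB1, hB2, hA1', hA2', hB1', hB2'⟩ := hbd x hx
    have hxi : x ∈ Set.Icc (0:ℝ) L := ⟨hx.1.le, hx.2.le⟩
    have hp := hPbound x hxi
    have hq := hQbound x hxi
    have hpl := hPbound L hLmem
    have hql := hQbound L hLmem
    have hc := hcb x hxi
    have hs := hsb x hxi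
    have hplx : |P L - P x| ≤ 2 * (CR * IL) := by
      calc |P L - P x| ≤ |P L| + |P x| := by
            rw [sub_eq_add_neg]; exact (abs_add_le _ _).trans (by rw [abs_neg])
        _ ≤ 2 * (CR * IL) := by linarith
    have hqlx : |Q L - Q x| ≤ 2 * (CR * IL) := by
      calc |Q L - Q x| ≤ |Q L| + |Q x| := by
            rw [sub_eq_add_neg]; exact (abs_add_le _ _).trans (by rw [abs_neg])
        _ ≤ 2 * (CR * IL) := by linarith
    have hcphi : |Real.cosh (x/μ) * φ x| ≤ CR * |φ x| := by
      rw [abs_mul]; exact mul_le_mul_of_nonneg_right hc (abs_nonneg _)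
    have hsphi : |Real.sinh (x/μ) * φ x| ≤ CR * |φ x| := by
      rw [abs_mul]; exact mul_le_mul_of_nonneg_right hs (abs_nonneg _)
    have h1 : |a₁' x * P x| ≤ U * (CR * IL) := by
      rw [abs_mul]; exact mul_le_mul hA1' hp (abs_nonneg _) hU.le
    have h2 : |a₂' x * Q x| ≤ U * (CR * IL) := by
      rw [abs_mul]; exact mul_le_mul hA2' hq (abs_nonneg _) hU.le
    have h3 : |b₁' x * (P L - P x)| ≤ U * (2 * (CR * IL)) := by
      rw [abs_mul]; exact mul_le_mul hB1' hplx (abs_nonneg _) hU.le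
    have h4 : |b₂' x * (Q L - Q x)| ≤ U * (2 * (CR * IL)) := by
      rw [abs_mul]; exact mul_le_mul hB2' hqlx (abs_nonneg _) hU.le
    have h5 : |a₁ x * (Real.cosh (x/μ) * φ x)| ≤ U * (CR * |φ x|) := by
      rw [abs_mul]; exact mul_le_mul hA1 hcphi (abs_nonneg _) hU.le
    have h6 : |a₂ x * (Real.sinh (x/μ) * φ x)| ≤ U * (CR * |φ x|) := by
      rw [abs_mul]; exact mul_le_mul hA2 hsphi (abs_nonneg _) hU.le
    have h7 : |b₁ x * (0 - Real.cosh (x/μ) * φ x)| ≤ U * (CR * |φ x|) := by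
      rw [abs_mul, zero_sub, abs_neg]
      exact mul_le_mul hB1 hcphi (abs_nonneg _) hU.le
    have h8 : |b₂ x * (0 - Real.sinh (x/μ) * φ x)| ≤ U * (CR * |φ x|) := by
      rw [abs_mul, zero_sub, abs_neg]
      exact mul_le_mul hB2 hsphi (abs_nonneg _) hU.le
    have habs : |D x| ≤
        (|a₁' x * P x| + |a₁ x * (Real.cosh (x/μ) * φ x)|) +
        (|a₂' x * Q x| + |a₂ x * (Real.sinh (x/μ) * φ x)|) +
        (|b₁' x * (P L - P x)| + |b₁ x * (0 - Real.cosh (x/μ) * φ x)|) +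
        (|b₂' x * (Q L - Q x)| + |b₂ x * (0 - Real.sinh (x/μ) * φ x)|) := by
      simp only [hDdef]
      exact (abs_add_le _ _).trans (add_le_add ((abs_add_le _ _).trans (add_le_add
        ((abs_add_le _ _).trans (add_le_add (abs_add_le _ _) (abs_add_le _ _)))
        (abs_add_le _ _))) (abs_add_le _ _))
    have hnn1 : 0 ≤ U * (CR * |φ x|) := by positivity
    rw [(by rw [hEdef] : E * IL = 6 * U * CR * IL),
      (by rw [hEdef] : E * |φ x| = 6 * U * CR * |φ x|)]
    linarith [habs, h1, h2, h3, h4, h5, h6, h7, h8, hnn1]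
  -- a.e. facts on [0,L]
  have haeIcc : ∀ᵐ ξ ∂(volume.restrict (Set.Icc (0:ℝ) L)), ξ ∈ Set.Ioo (0:ℝ) L := by
    have h2 : (volume.restrict (Set.Icc (0:ℝ) L)) (Set.Ioo (0:ℝ) L)ᶜ = 0 := by
      rw [Measure.restrict_apply (measurableSet_Ioo.compl)]
      refine measure_mono_null (fun y hy => ?_) (?_ : volume ({0, L} : Set ℝ) = 0)
      · obtain ⟨hy1, hy2⟩ := hy
        simp only [Set.mem_compl_iff, Set.mem_Ioo, not_and_or, not_lt] at hy1
        rcases hy1 with h | h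
        · left; exact le_antisymm h hy2.1
        · right; exact le_antisymm hy2.2 h
      · exact (Set.countable_insert.2 (Set.countable_singleton _)).measure_zero _
    exact MeasureTheory.mem_ae_iff.2 h2
  have haeIoc : ∀ᵐ ξ ∂(volume.restrict (Set.Ioc (0:ℝ) L)), ξ ∈ Set.Ioo (0:ℝ) L := by
    rw [← Measure.restrict_congr_set Ioo_ae_eq_Ioc]
    exact ae_restrict_mem measurableSet_Ioo
  -- continuity of F on Ioo
  have hFc : ContinuousOn F (Set.Ioo 0 L) := by
    rw [hFdef]
    intro x hx
    obtain ⟨hda₁, hda₂, hdb₁, hdb₂⟩ := hd x hx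
    exact ((((hda₁.continuousAt.mul (hPd x hx).continuousAt).add
      (hda₂.continuousAt.mul (hQd x hx).continuousAt)).add
      (hdb₁.continuousAt.mul (continuousAt_const.sub (hPd x hx).continuousAt))).add
      (hdb₂.continuousAt.mul (continuousAt_const.sub (hQd x hx).continuousAt))).continuousWithinAt
  -- integrability of f^2
  have hIooTop : volume (Set.Ioo (0:ℝ) L) ≠ ⊤ := by
    rw [Real.volume_Ioo]; exact ENNReal.ofReal_ne_top
  have hF2int : IntegrableOn (fun ξ => F ξ ^ 2) (Set.Ioo (0:ℝ) L) volume := by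
    refine ⟨((hFc.pow 2).aestronglyMeasurable measurableSet_Ioo), ?_⟩
    refine HasFiniteIntegral.restrict_of_bounded (C := (E * IL)^2) hIooTop.lt_top ?_
    filter_upwards [ae_restrict_mem measurableSet_Ioo] with x hx
    have h := hFb x hx
    rw [Real.norm_eq_abs, abs_of_nonneg (sq_nonneg _), ← sq_abs]
    exact pow_le_pow_left₀ (abs_nonneg _) h 2
  have hf2int : IntegrableOn (fun ξ => f ξ ^ 2) (Set.Ioc (0:ℝ) L) volume := by
    have h1 : IntegrableOn (fun ξ => f ξ ^ 2) (Set.Ioo (0:ℝ) L) volume := by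
      refine hF2int.congr ?_
      filter_upwards [ae_restrict_mem measurableSet_Ioo] with x hx
      rw [hrep x hx]
    show Integrable _ (volume.restrict (Set.Ioc (0:ℝ) L))
    rwa [← Measure.restrict_congr_set Ioo_ae_eq_Ioc]
  have hf2ii : IntervalIntegrable (fun ξ => f ξ ^ 2) volume 0 L :=
    (intervalIntegrable_iff_integrableOn_Ioc_of_le hL.le).2 hf2int
  have hb₁int : (∫ ξ in (0:ℝ)..L, f ξ ^ 2) ≤ (E * IL)^2 * L := by
    have h := intervalIntegral.integral_mono_ae_restrict hL.le hf2ii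
      (_root_.intervalIntegrable_const (c := (E*IL)^2)) ?_
    · rw [intervalIntegral.integral_const, smul_eq_mul, sub_zero, mul_comm] at h
      exact h
    · filter_upwards [haeIcc] with ξ hξ
      have h := hFb ξ hξ
      calc f ξ ^ 2 = |f ξ| ^ 2 := (sq_abs _).symm
        _ ≤ (E * IL)^2 := by
            rw [hrep ξ hξ]
            exact pow_le_pow_left₀ (abs_nonneg _) h 2
  -- integrability of (deriv f)^2
  have hg2cont : ContinuousOn (fun ξ => 2*(E*IL)^2 + 2*E^2 * φ ξ ^ 2) (Set.Icc 0 L) :=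
    continuousOn_const.add (continuousOn_const.mul (hφ.pow 2))
  have hg2ii : IntervalIntegrable (fun ξ => 2*(E*IL)^2 + 2*E^2 * φ ξ ^ 2) volume 0 L :=
    hmono_int _ hg2cont L hLmem
  have hDsq : ∀ ξ ∈ Set.Ioo (0:ℝ) L,
      (deriv f ξ)^2 ≤ 2*(E*IL)^2 + 2*E^2 * φ ξ ^ 2 := by
    intro ξ hξ
    rw [hderiv_eq ξ hξ]
    have h := hDb ξ hξ
    have h2 : |D ξ|^2 ≤ (E * IL + E * |φ ξ|)^2 := pow_le_pow_left₀ (abs_nonneg _) h 2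
    rw [sq_abs] at h2
    nlinarith [sq_abs (φ ξ), abs_nonneg (φ ξ), sq_nonneg (E*IL - E*|φ ξ|)]
  have hdf2int : IntegrableOn (fun ξ => (deriv f ξ)^2) (Set.Ioc (0:ℝ) L) volume := by
    refine Integrable.mono' ((intervalIntegrable_iff_integrableOn_Ioc_of_le hL.le).1 hg2ii)
      (((measurable_deriv f).pow_const 2).aestronglyMeasurable.restrict) ?_
    filter_upwards [haeIoc] with ξ hξ
    rw [Real.norm_eq_abs, abs_of_nonneg (sq_nonneg _)]
    exact hDsq ξ hξ
  have hdf2ii : IntervalIntegrable (fun ξ => (deriv f ξ)^2) volume 0 L :=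
    (intervalIntegrable_iff_integrableOn_Ioc_of_le hL.le).2 hdf2int
  have hb₂int : (∫ ξ in (0:ℝ)..L, (deriv f ξ)^2) ≤ 2*(E*IL)^2 * L + 2*E^2 * N^2 := by
    have h := intervalIntegral.integral_mono_ae_restrict hL.le hdf2ii hg2ii ?_
    · have hcomp : (∫ ξ in (0:ℝ)..L, (2*(E*IL)^2 + 2*E^2 * φ ξ ^ 2)) =
          2*(E*IL)^2 * L + 2*E^2 * N^2 := by
        rw [intervalIntegral.integral_add (_root_.intervalIntegrable_const (c := 2*(E*IL)^2))
          (hint2.const_mul _), intervalIntegral.integral_const,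
          intervalIntegral.integral_const_mul, smul_eq_mul, sub_zero, hN2]
        ring
      linarith [hcomp ▸ h]
    · filter_upwards [haeIcc] with ξ hξ
      exact hDsq ξ hξ
  -- final assembly
  have htot : (∫ ξ in (0:ℝ)..L, f ξ ^ 2) +
      β/6 * (∫ ξ in (0:ℝ)..L, (deriv f ξ)^2) ≤
      (E^2 * L^2 + β/6 * (2*E^2*L^2 + 2*E^2)) * N^2 := by
    have hβ6 : (0:ℝ) < β/6 := by positivity
    have hEIL : (E*IL)^2 ≤ E^2 * (L * N^2) := by
      rw [mul_pow]
      exact mul_le_mul_of_nonneg_left hILsq (sq_nonneg E)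
    have t1 : (∫ ξ in (0:ℝ)..L, f ξ ^ 2) ≤ E^2 * L^2 * N^2 := by
      calc (∫ ξ in (0:ℝ)..L, f ξ ^ 2) ≤ (E*IL)^2 * L := hb₁int
        _ ≤ E^2 * (L * N^2) * L := mul_le_mul_of_nonneg_right hEIL hL.le
        _ = E^2 * L^2 * N^2 := by ring
    have t2 : (∫ ξ in (0:ℝ)..L, (deriv f ξ)^2) ≤ 2*E^2*L^2*N^2 + 2*E^2*N^2 := by
      calc (∫ ξ in (0:ℝ)..L, (deriv f ξ)^2) ≤ 2*(E*IL)^2 * L + 2*E^2 * N^2 := hb₂int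
        _ ≤ 2*(E^2 * (L * N^2)) * L + 2*E^2 * N^2 := by
            have h := mul_le_mul_of_nonneg_right hEIL (by positivity : (0:ℝ) ≤ 2*L)
            linarith
        _ = 2*E^2*L^2*N^2 + 2*E^2*N^2 := by ring
    have t3 := mul_le_mul_of_nonneg_left t2 (le_of_lt hβ6)
    linarith [t1, t3]
  have hCCnn : (0:ℝ) ≤ E^2 * L^2 + β/6 * (2*E^2*L^2 + 2*E^2) := by positivity
  have hfx : ∀ ξ, (∫ s in (0:ℝ)..L, k ξ s * φ s) = f ξ := fun ξ => by rw [hfdef]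
  calc Real.sqrt ((∫ ξ in (0:ℝ)..L, (∫ s in (0:ℝ)..L, k ξ s * φ s) ^ 2) +
        β/6 * (∫ ξ in (0:ℝ)..L, (deriv f ξ)^2))
      = Real.sqrt ((∫ ξ in (0:ℝ)..L, f ξ ^ 2) +
        β/6 * (∫ ξ in (0:ℝ)..L, (deriv f ξ)^2)) := by simp only [hfx]
    _ ≤ Real.sqrt ((E^2 * L^2 + β/6 * (2*E^2*L^2 + 2*E^2)) * N^2) := Real.sqrt_le_sqrt htot
    _ = Real.sqrt (E^2 * L^2 + β/6 * (2*E^2*L^2 + 2*E^2)) * N := by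
        rw [Real.sqrt_mul hCCnn, Real.sqrt_sq hNnn]

set_option maxHeartbeats 1000000 in
/-- The integral operators `Φ₁` and `Φ₂`, with kernels `G` and `K`, are bounded from
`L²([0,L])` into the Sobolev space `H¹` equipped with the weighted norm
`‖f‖_{H¹} = (‖f‖²_{L²} + (β/6)‖f'‖²_{L²})^{1/2}`. -/
theorem Phi1_Phi2_bounded_L2_to_H1
    (L β : ℝ) (hL : 0 < L) (hβ : 0 < β)
    (μ : ℝ) (hμ : μ = Real.sqrt (β / 6))
    (G : ℝ → ℝ → ℝ)
    (hG : ∀ ξ s : ℝ, G ξ s =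
      (Real.cosh ((L - |s - ξ|) / μ) - Real.cosh ((L - (ξ + s)) / μ)) /
        (2 * μ * Real.sinh (L / μ)))
    (K : ℝ → ℝ → ℝ)
    (hK : ∀ ξ s : ℝ, ξ ≠ s → K ξ s =
      (3 / β) * ((Real.sinh ((L - ξ - s) / μ) +
        Real.sign (ξ - s) * Real.sinh ((L - |ξ - s|) / μ)) / Real.sinh (L / μ))) :
    ∃ C₁ > (0 : ℝ), ∃ C₂ > (0 : ℝ), ∀ φ : ℝ → ℝ, ContinuousOn φ (Set.Icc (0 : ℝ) L) →
      Real.sqrt ((∫ ξ in (0 : ℝ)..L, (∫ s in (0 : ℝ)..L, G ξ s * φ s) ^ 2) +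
          β / 6 * ∫ ξ in (0 : ℝ)..L,
            (deriv (fun x => ∫ s in (0 : ℝ)..L, G x s * φ s) ξ) ^ 2) ≤
        C₁ * Real.sqrt (∫ s in (0 : ℝ)..L, φ s ^ 2) ∧
      Real.sqrt ((∫ ξ in (0 : ℝ)..L, (∫ s in (0 : ℝ)..L, K ξ s * φ s) ^ 2) +
          β / 6 * ∫ ξ in (0 : ℝ)..L,
            (deriv (fun x => ∫ s in (0 : ℝ)..L, K x s * φ s) ξ) ^ 2) ≤
        C₂ * Real.sqrt (∫ s in (0 : ℝ)..L, φ s ^ 2) := by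
  have hμ0 : 0 < μ := by rw [hμ]; exact Real.sqrt_pos.2 (by positivity)
  set σ : ℝ := Real.sinh (L/μ) with hσdef
  have hσ : 0 < σ := by rw [hσdef]; exact Real.sinh_pos_iff.2 (by positivity)
  clear_value σ
  set CL : ℝ := Real.cosh (L/μ) with hCLdef
  have hCL : 0 < CL := by rw [hCLdef]; exact Real.cosh_pos _
  clear_value CL
  have hμσ : 0 < μ * σ := mul_pos hμ0 hσ
  have hβσ : 0 < β * σ := mul_pos hβ hσ
  -- bounds for cosh and sinh with arguments t/μ, t ∈ [0,L]
  have hcoshb : ∀ t : ℝ, 0 ≤ t → t ≤ L → |Real.cosh (t/μ)| ≤ CL := by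
    intro t h0 h1
    rw [abs_of_pos (Real.cosh_pos _), hCLdef, Real.cosh_le_cosh,
      abs_of_nonneg (div_nonneg h0 hμ0.le), abs_of_nonneg (div_nonneg hL.le hμ0.le)]
    exact (div_le_div_iff_of_pos_right hμ0).2 h1
  have hsinhb : ∀ t : ℝ, 0 ≤ t → t ≤ L → |Real.sinh (t/μ)| ≤ CL := by
    intro t h0 h1
    calc |Real.sinh (t/μ)| = Real.sinh |t/μ| := by rw [Real.abs_sinh]
      _ ≤ Real.cosh |t/μ| := (Real.sinh_lt_cosh _).le
      _ = Real.cosh (t/μ) := Real.cosh_abs _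
      _ ≤ CL := by
          have := hcoshb t h0 h1
          rwa [abs_of_pos (Real.cosh_pos _)] at this
  -- derivative helpers
  have hlin1 : ∀ x : ℝ, HasDerivAt (fun y => (L-y)/μ) (-1/μ) x := by
    intro x
    have h := ((hasDerivAt_id x).const_sub L).div_const μ
    simpa using h
  have hlin2 : ∀ x : ℝ, HasDerivAt (fun y : ℝ => y/μ) (1/μ) x := by
    intro x
    have h := (hasDerivAt_id x).div_const μ
    simpa using h
  have hsinhL : ∀ x : ℝ, HasDerivAt (fun y => Real.sinh ((L-y)/μ))
      (Real.cosh ((L-x)/μ) * (-1/μ)) x := by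
    intro x
    exact (Real.hasDerivAt_sinh _).comp x (hlin1 x)
  have hsinhx : ∀ x : ℝ, HasDerivAt (fun y => Real.sinh (y/μ))
      (Real.cosh (x/μ) * (1/μ)) x := by
    intro x
    exact (Real.hasDerivAt_sinh _).comp x (hlin2 x)
  -- derivative packages
  have hdG : ∀ x ∈ Set.Ioo (0:ℝ) L,
      HasDerivAt (fun _ : ℝ => (0:ℝ)) ((fun _ : ℝ => (0:ℝ)) x) x ∧
      HasDerivAt (fun x => Real.sinh ((L-x)/μ) / (μ*σ))
        (Real.cosh ((L-x)/μ) * (-1/μ) / (μ*σ)) x ∧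
      HasDerivAt (fun x => Real.sinh (x/μ) / μ) (Real.cosh (x/μ) * (1/μ) / μ) x ∧
      HasDerivAt (fun x => -(CL/(μ*σ)) * Real.sinh (x/μ))
        (-(CL/(μ*σ)) * (Real.cosh (x/μ) * (1/μ))) x := by
    intro x _
    exact ⟨hasDerivAt_const x 0, (hsinhL x).div_const (μ*σ), (hsinhx x).div_const μ,
      (hsinhx x).const_mul (-(CL/(μ*σ)))⟩
  have hdK : ∀ x ∈ Set.Ioo (0:ℝ) L,
      HasDerivAt (fun x => (6/(β*σ)) * Real.sinh ((L-x)/μ))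
        ((6/(β*σ)) * (Real.cosh ((L-x)/μ) * (-1/μ))) x ∧
      HasDerivAt (fun _ : ℝ => (0:ℝ)) ((fun _ : ℝ => (0:ℝ)) x) x ∧
      HasDerivAt (fun x => -(6*CL/(β*σ)) * Real.sinh (x/μ))
        (-(6*CL/(β*σ)) * (Real.cosh (x/μ) * (1/μ))) x ∧
      HasDerivAt (fun x => (6/β) * Real.sinh (x/μ)) ((6/β) * (Real.cosh (x/μ) * (1/μ))) x := by
    intro x _
    exact ⟨(hsinhL x).const_mul (6/(β*σ)), hasDerivAt_const x 0,
      (hsinhx x).const_mul (-(6*CL/(β*σ))), (hsinhx x).const_mul (6/β)⟩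
  -- bound constants
  set UG : ℝ := CL/(μ*σ) + CL/μ + (CL/(μ*σ))*CL + (CL*(1/μ))/(μ*σ) + (CL*(1/μ))/μ
      + (CL/(μ*σ))*(CL*(1/μ)) with hUGdef
  have hT1G : 0 < CL/(μ*σ) := div_pos hCL hμσ
  have hT2G : 0 < CL/μ := div_pos hCL hμ0
  have hT3G : 0 < (CL/(μ*σ))*CL := mul_pos hT1G hCL
  have hT0 : 0 < CL*(1/μ) := mul_pos hCL (one_div_pos.2 hμ0)
  have hT4G : 0 < (CL*(1/μ))/(μ*σ) := div_pos hT0 hμσ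
  have hT5G : 0 < (CL*(1/μ))/μ := div_pos hT0 hμ0
  have hT6G : 0 < (CL/(μ*σ))*(CL*(1/μ)) := mul_pos hT1G hT0
  have hUG0 : 0 < UG := by rw [hUGdef]; linarith
  clear_value UG
  set UK : ℝ := 6/(β*σ)*CL + 6*CL/(β*σ)*CL + 6/β*CL + (6/(β*σ))*(CL*(1/μ))
      + (6*CL/(β*σ))*(CL*(1/μ)) + (6/β)*(CL*(1/μ)) with hUKdef
  have hS1 : 0 < 6/(β*σ) := div_pos (by norm_num) hβσ
  have hS2 : 0 < 6*CL/(β*σ) := div_pos (by positivity) hβσ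
  have hS3 : 0 < 6/β := div_pos (by norm_num) hβ
  have hT1K : 0 < 6/(β*σ)*CL := mul_pos hS1 hCL
  have hT2K : 0 < 6*CL/(β*σ)*CL := mul_pos hS2 hCL
  have hT3K : 0 < 6/β*CL := mul_pos hS3 hCL
  have hT4K : 0 < (6/(β*σ))*(CL*(1/μ)) := mul_pos hS1 hT0
  have hT5K : 0 < (6*CL/(β*σ))*(CL*(1/μ)) := mul_pos hS2 hT0
  have hT6K : 0 < (6/β)*(CL*(1/μ)) := mul_pos hS3 hT0
  have hUK0 : 0 < UK := by rw [hUKdef]; linarith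
  clear_value UK
  have habs1 : |(-1:ℝ)/μ| = 1/μ := by
    rw [abs_div, abs_neg, abs_one, abs_of_pos hμ0]
  have habs2 : |(1:ℝ)/μ| = 1/μ := by
    rw [abs_div, abs_one, abs_of_pos hμ0]
  -- bounds for G coefficients
  have hbdG : ∀ x ∈ Set.Ioo (0:ℝ) L, |(0:ℝ)| ≤ UG ∧
      |Real.sinh ((L-x)/μ) / (μ*σ)| ≤ UG ∧
      |Real.sinh (x/μ) / μ| ≤ UG ∧
      |-(CL/(μ*σ)) * Real.sinh (x/μ)| ≤ UG ∧
      |(0:ℝ)| ≤ UG ∧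
      |Real.cosh ((L-x)/μ) * (-1/μ) / (μ*σ)| ≤ UG ∧
      |Real.cosh (x/μ) * (1/μ) / μ| ≤ UG ∧
      |-(CL/(μ*σ)) * (Real.cosh (x/μ) * (1/μ))| ≤ UG := by
    intro x hx
    have hx0 : 0 ≤ x := hx.1.le
    have hxL : x ≤ L := hx.2.le
    have hc1 := hcoshb (L-x) (by linarith) (by linarith)
    have hs1 := hsinhb (L-x) (by linarith) (by linarith)
    have hc2 := hcoshb x hx0 hxL
    have hs2 := hsinhb x hx0 hxL
    have e2 : |Real.sinh ((L-x)/μ) / (μ*σ)| ≤ CL/(μ*σ) := by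
      rw [abs_div, abs_of_pos hμσ]
      exact (div_le_div_iff_of_pos_right hμσ).2 hs1
    have e3 : |Real.sinh (x/μ) / μ| ≤ CL/μ := by
      rw [abs_div, abs_of_pos hμ0]
      exact (div_le_div_iff_of_pos_right hμ0).2 hs2
    have e4 : |-(CL/(μ*σ)) * Real.sinh (x/μ)| ≤ (CL/(μ*σ))*CL := by
      rw [abs_mul, abs_neg, abs_of_pos hT1G]
      exact mul_le_mul_of_nonneg_left hs2 hT1G.le
    have e5 : |Real.cosh ((L-x)/μ) * (-1/μ) / (μ*σ)| ≤ (CL*(1/μ))/(μ*σ) := by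
      rw [abs_div, abs_of_pos hμσ, abs_mul, habs1]
      exact (div_le_div_iff_of_pos_right hμσ).2
        (mul_le_mul_of_nonneg_right hc1 (one_div_pos.2 hμ0).le)
    have e6 : |Real.cosh (x/μ) * (1/μ) / μ| ≤ (CL*(1/μ))/μ := by
      rw [abs_div, abs_of_pos hμ0, abs_mul, habs2]
      exact (div_le_div_iff_of_pos_right hμ0).2
        (mul_le_mul_of_nonneg_right hc2 (one_div_pos.2 hμ0).le)
    have e7 : |-(CL/(μ*σ)) * (Real.cosh (x/μ) * (1/μ))| ≤ (CL/(μ*σ))*(CL*(1/μ)) := by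
      rw [abs_mul, abs_neg, abs_of_pos hT1G, abs_mul, habs2]
      exact mul_le_mul_of_nonneg_left
        (mul_le_mul_of_nonneg_right hc2 (one_div_pos.2 hμ0).le) hT1G.le
    have hle1 : CL/(μ*σ) ≤ UG := by
      rw [hUGdef]; linarith only [hT1G, hT2G, hT3G, hT4G, hT5G, hT6G]
    have hle2 : CL/μ ≤ UG := by
      rw [hUGdef]; linarith only [hT1G, hT2G, hT3G, hT4G, hT5G, hT6G]
    have hle3 : (CL/(μ*σ))*CL ≤ UG := by
      rw [hUGdef]; linarith only [hT1G, hT2G, hT3G, hT4G, hT5G, hT6G]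
    have hle4 : (CL*(1/μ))/(μ*σ) ≤ UG := by
      rw [hUGdef]; linarith only [hT1G, hT2G, hT3G, hT4G, hT5G, hT6G]
    have hle5 : (CL*(1/μ))/μ ≤ UG := by
      rw [hUGdef]; linarith only [hT1G, hT2G, hT3G, hT4G, hT5G, hT6G]
    have hle6 : (CL/(μ*σ))*(CL*(1/μ)) ≤ UG := by
      rw [hUGdef]; linarith only [hT1G, hT2G, hT3G, hT4G, hT5G, hT6G]
    exact ⟨by rw [abs_zero]; exact hUG0.le, e2.trans hle1, e3.trans hle2, e4.trans hle3,
      by rw [abs_zero]; exact hUG0.le, e5.trans hle4, e6.trans hle5, e7.trans hle6⟩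
  -- bounds for K coefficients
  have hbdK : ∀ x ∈ Set.Ioo (0:ℝ) L,
      |(6/(β*σ)) * Real.sinh ((L-x)/μ)| ≤ UK ∧
      |(0:ℝ)| ≤ UK ∧
      |-(6*CL/(β*σ)) * Real.sinh (x/μ)| ≤ UK ∧
      |(6/β) * Real.sinh (x/μ)| ≤ UK ∧
      |(6/(β*σ)) * (Real.cosh ((L-x)/μ) * (-1/μ))| ≤ UK ∧
      |(0:ℝ)| ≤ UK ∧
      |-(6*CL/(β*σ)) * (Real.cosh (x/μ) * (1/μ))| ≤ UK ∧
      |(6/β) * (Real.cosh (x/μ) * (1/μ))| ≤ UK := by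
    intro x hx
    have hx0 : 0 ≤ x := hx.1.le
    have hxL : x ≤ L := hx.2.le
    have hc1 := hcoshb (L-x) (by linarith) (by linarith)
    have hs1 := hsinhb (L-x) (by linarith) (by linarith)
    have hc2 := hcoshb x hx0 hxL
    have hs2 := hsinhb x hx0 hxL
    have e1 : |(6/(β*σ)) * Real.sinh ((L-x)/μ)| ≤ 6/(β*σ)*CL := by
      rw [abs_mul, abs_of_pos hS1]
      exact mul_le_mul_of_nonneg_left hs1 hS1.le
    have e3 : |-(6*CL/(β*σ)) * Real.sinh (x/μ)| ≤ 6*CL/(β*σ)*CL := by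
      rw [abs_mul, abs_neg, abs_of_pos hS2]
      exact mul_le_mul_of_nonneg_left hs2 hS2.le
    have e4 : |(6/β) * Real.sinh (x/μ)| ≤ 6/β*CL := by
      rw [abs_mul, abs_of_pos hS3]
      exact mul_le_mul_of_nonneg_left hs2 hS3.le
    have e5 : |(6/(β*σ)) * (Real.cosh ((L-x)/μ) * (-1/μ))| ≤ (6/(β*σ))*(CL*(1/μ)) := by
      rw [abs_mul, abs_of_pos hS1, abs_mul, habs1]
      exact mul_le_mul_of_nonneg_left
        (mul_le_mul_of_nonneg_right hc1 (one_div_pos.2 hμ0).le) hS1.le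
    have e6 : |-(6*CL/(β*σ)) * (Real.cosh (x/μ) * (1/μ))| ≤ (6*CL/(β*σ))*(CL*(1/μ)) := by
      rw [abs_mul, abs_neg, abs_of_pos hS2, abs_mul, habs2]
      exact mul_le_mul_of_nonneg_left
        (mul_le_mul_of_nonneg_right hc2 (one_div_pos.2 hμ0).le) hS2.le
    have e7 : |(6/β) * (Real.cosh (x/μ) * (1/μ))| ≤ (6/β)*(CL*(1/μ)) := by
      rw [abs_mul, abs_of_pos hS3, abs_mul, habs2]
      exact mul_le_mul_of_nonneg_left
        (mul_le_mul_of_nonneg_right hc2 (one_div_pos.2 hμ0).le) hS3.le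
    have hle1 : 6/(β*σ)*CL ≤ UK := by
      rw [hUKdef]; linarith only [hT1K, hT2K, hT3K, hT4K, hT5K, hT6K]
    have hle2 : 6*CL/(β*σ)*CL ≤ UK := by
      rw [hUKdef]; linarith only [hT1K, hT2K, hT3K, hT4K, hT5K, hT6K]
    have hle3 : 6/β*CL ≤ UK := by
      rw [hUKdef]; linarith only [hT1K, hT2K, hT3K, hT4K, hT5K, hT6K]
    have hle4 : (6/(β*σ))*(CL*(1/μ)) ≤ UK := by
      rw [hUKdef]; linarith only [hT1K, hT2K, hT3K, hT4K, hT5K, hT6K]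
    have hle5 : (6*CL/(β*σ))*(CL*(1/μ)) ≤ UK := by
      rw [hUKdef]; linarith only [hT1K, hT2K, hT3K, hT4K, hT5K, hT6K]
    have hle6 : (6/β)*(CL*(1/μ)) ≤ UK := by
      rw [hUKdef]; linarith only [hT1K, hT2K, hT3K, hT4K, hT5K, hT6K]
    exact ⟨e1.trans hle1, by rw [abs_zero]; exact hUK0.le, e3.trans hle2, e4.trans hle3,
      e5.trans hle4, by rw [abs_zero]; exact hUK0.le, e6.trans hle5, e7.trans hle6⟩
  -- kernel identities
  have hkG1 : ∀ x ∈ Set.Ioo (0:ℝ) L, ∀ s ∈ Set.Icc (0:ℝ) L, s < x →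
      G x s = 0 * Real.cosh (s/μ) + (Real.sinh ((L-x)/μ) / (μ*σ)) * Real.sinh (s/μ) := by
    intro x hx s hs hsx
    have e1 : (L - |s - x|)/μ = (L-x)/μ + s/μ := by
      rw [abs_of_nonpos (by linarith : s - x ≤ 0)]; ring
    have e2 : (L - (x + s))/μ = (L-x)/μ - s/μ := by ring
    rw [hG, e1, e2, Real.cosh_add, Real.cosh_sub]
    field_simp
    ring
  have hkG2 : ∀ x ∈ Set.Ioo (0:ℝ) L, ∀ s ∈ Set.Icc (0:ℝ) L, x < s →
      G x s = (Real.sinh (x/μ) / μ) * Real.cosh (s/μ) +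
        (-(CL/(μ*σ)) * Real.sinh (x/μ)) * Real.sinh (s/μ) := by
    intro x hx s hs hxs
    have e1 : (L - |s - x|)/μ = (L-s)/μ + x/μ := by
      rw [abs_of_nonneg (by linarith : (0:ℝ) ≤ s - x)]; ring
    have e2 : (L - (x + s))/μ = (L-s)/μ - x/μ := by ring
    have e3 : (L - s)/μ = L/μ - s/μ := by ring
    rw [hG, e1, e2, Real.cosh_add, Real.cosh_sub, e3, Real.cosh_sub, Real.sinh_sub,
      ← hσdef, ← hCLdef]
    field_simp
    ring
  have hkK1 : ∀ x ∈ Set.Ioo (0:ℝ) L, ∀ s ∈ Set.Icc (0:ℝ) L, s < x →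
      K x s = ((6/(β*σ)) * Real.sinh ((L-x)/μ)) * Real.cosh (s/μ) + 0 * Real.sinh (s/μ) := by
    intro x hx s hs hsx
    have e1 : (L - x - s)/μ = (L-x)/μ - s/μ := by ring
    rw [hK x s (by linarith : x ≠ s), Real.sign_of_pos (by linarith : (0:ℝ) < x - s),
      abs_of_pos (by linarith : (0:ℝ) < x - s), e1,
      (by ring : (L - (x - s))/μ = (L-x)/μ + s/μ), Real.sinh_sub, Real.sinh_add]
    field_simp
    ring
  have hkK2 : ∀ x ∈ Set.Ioo (0:ℝ) L, ∀ s ∈ Set.Icc (0:ℝ) L, x < s →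
      K x s = (-(6*CL/(β*σ)) * Real.sinh (x/μ)) * Real.cosh (s/μ) +
        ((6/β) * Real.sinh (x/μ)) * Real.sinh (s/μ) := by
    intro x hx s hs hxs
    have e1 : (L - x - s)/μ = (L-s)/μ - x/μ := by ring
    rw [hK x s (by linarith : x ≠ s), Real.sign_of_neg (by linarith : x - s < 0),
      abs_of_neg (by linarith : x - s < 0), e1,
      (by ring : (L - -(x - s))/μ = (L-s)/μ + x/μ), Real.sinh_sub, Real.sinh_add,
      (by ring : (L - s)/μ = L/μ - s/μ), Real.sinh_sub, Real.cosh_sub,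
      ← hσdef, ← hCLdef]
    field_simp
    ring
  -- conclude via aux_bound
  refine ⟨Real.sqrt ((6*UG*Real.cosh (L/μ))^2 * L^2 +
      β/6 * (2*(6*UG*Real.cosh (L/μ))^2 * L^2 + 2*(6*UG*Real.cosh (L/μ))^2)), ?_,
    Real.sqrt ((6*UK*Real.cosh (L/μ))^2 * L^2 +
      β/6 * (2*(6*UK*Real.cosh (L/μ))^2 * L^2 + 2*(6*UK*Real.cosh (L/μ))^2)), ?_, ?_⟩
  · apply Real.sqrt_pos.2
    have h1 : 0 < (6*UG*Real.cosh (L/μ))^2 * L^2 :=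
      mul_pos (pow_pos (mul_pos (mul_pos (by norm_num) hUG0) (Real.cosh_pos _)) 2)
        (pow_pos hL 2)
    have h2 : 0 ≤ β/6 * (2*(6*UG*Real.cosh (L/μ))^2 * L^2 + 2*(6*UG*Real.cosh (L/μ))^2) :=
      mul_nonneg (div_nonneg hβ.le (by norm_num)) (by positivity)
    linarith
  · apply Real.sqrt_pos.2
    have h1 : 0 < (6*UK*Real.cosh (L/μ))^2 * L^2 :=
      mul_pos (pow_pos (mul_pos (mul_pos (by norm_num) hUK0) (Real.cosh_pos _)) 2)
        (pow_pos hL 2)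
    have h2 : 0 ≤ β/6 * (2*(6*UK*Real.cosh (L/μ))^2 * L^2 + 2*(6*UK*Real.cosh (L/μ))^2) :=
      mul_nonneg (div_nonneg hβ.le (by norm_num)) (by positivity)
    linarith
  · intro φ hφ
    refine ⟨?_, ?_⟩
    · exact aux_bound L β μ hL hβ hμ0 φ hφ G (fun _ => 0)
        (fun x => Real.sinh ((L-x)/μ) / (μ*σ)) (fun x => Real.sinh (x/μ) / μ)
        (fun x => -(CL/(μ*σ)) * Real.sinh (x/μ)) (fun _ => 0)
        (fun x => Real.cosh ((L-x)/μ) * (-1/μ) / (μ*σ))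
        (fun x => Real.cosh (x/μ) * (1/μ) / μ)
        (fun x => -(CL/(μ*σ)) * (Real.cosh (x/μ) * (1/μ))) UG hUG0
        hkG1 hkG2 hdG hbdG
    · exact aux_bound L β μ hL hβ hμ0 φ hφ K
        (fun x => (6/(β*σ)) * Real.sinh ((L-x)/μ)) (fun _ => 0)
        (fun x => -(6*CL/(β*σ)) * Real.sinh (x/μ)) (fun x => (6/β) * Real.sinh (x/μ))
        (fun x => (6/(β*σ)) * (Real.cosh ((L-x)/μ) * (-1/μ))) (fun _ => 0)
        (fun x => -(6*CL/(β*σ)) * (Real.cosh (x/μ) * (1/μ)))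
        (fun x => (6/β) * (Real.cosh (x/μ) * (1/μ))) UK hUK0
        hkK1 hkK2 hdK hbdK
end

section
/- Let L, T > 0 and α, β > 0 be fixed constants, set μ = √(β/6), let K(ξ,s) = (3/β)[sinh((L − ξ − s)/μ) + sign(ξ − s) sinh((L − |ξ − s|)/μ)]/sinh(L/μ) for ξ ≠ s, and let c : [0, L] → ℝ be continuous. Let N₀, V₀ : [0, L] → ℝ be continuously differentiable with N₀(0) = N₀(L) = V₀(0) = V₀(L) = 0. Then there exists T₀ ∈ (0, T] and continuous functions N, V : [0, L] × [0, T₀] → ℝ satisfying, for all (ξ, t) ∈ [0, L] × [0, T₀], the coupled integral system N(ξ, t) = N₀(ξ) + ∫₀ᵗ ∫₀ᴸ K(ξ, s) (1 + α c(s)² N(s, τ)) V(s, τ) ds dτ and V(ξ, t) = V₀(ξ) + ∫₀ᵗ ∫₀ᴸ K(ξ, s) [ c(s) N(s, τ) + (α/2) c(s)² V(s, τ)² ] ds dτ; moreover this solution satisfies the boundary conditions N(0, t) = N(L, t) = V(0, t) = V(L, t) = 0 for all t ∈ [0, T₀]. -/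
open MeasureTheory Set Filter Function intervalIntegral

namespace BoussinesqAux


lemma sign_measurable : Measurable Real.sign := by
  have h : Real.sign = fun r : ℝ => if r < 0 then (-1 : ℝ) else if 0 < r then 1 else 0 := by
    funext r
    rcases lt_trichotomy r 0 with h | h | h
    · rw [Real.sign_of_neg h, if_pos h]
    · subst h; rw [Real.sign_zero, if_neg (lt_irrefl _), if_neg (lt_irrefl _)]
    · rw [Real.sign_of_pos h, if_neg (not_lt.2 h.le), if_pos h]
  rw [h]
  exact Measurable.ite (measurableSet_lt measurable_id measurable_const) measurable_const
    (Measurable.ite (measurableSet_lt measurable_const measurable_id) measurable_const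
      measurable_const)

lemma sign_continuousAt {x : ℝ} (hx : x ≠ 0) : ContinuousAt Real.sign x := by
  rcases hx.lt_or_gt with h | h
  · have he : Real.sign =ᶠ[nhds x] fun _ => (-1 : ℝ) := by
      filter_upwards [Iio_mem_nhds h] with y hy
      exact Real.sign_of_neg hy
    exact ContinuousAt.congr continuousAt_const he.symm
  · have he : Real.sign =ᶠ[nhds x] fun _ => (1 : ℝ) := by
      filter_upwards [Ioi_mem_nhds h] with y hy
      exact Real.sign_of_pos hy
    exact ContinuousAt.congr continuousAt_const he.symm

lemma sign_abs_le (x : ℝ) : |Real.sign x| ≤ 1 := by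
  rcases Real.sign_apply_eq x with h | h | h <;> rw [h] <;> norm_num

noncomputable def Kt (L β μ : ℝ) (ξ s : ℝ) : ℝ :=
  (3 / β) * ((Real.sinh ((L - ξ - s) / μ) +
    Real.sign (ξ - s) * Real.sinh ((L - |ξ - s|) / μ)) / Real.sinh (L / μ))

lemma Kt_measurable (L β μ : ℝ) (ξ : ℝ) : Measurable (Kt L β μ ξ) := by
  have m1 : Measurable fun s : ℝ => Real.sinh ((L - ξ - s) / μ) :=
    Real.continuous_sinh.measurable.comp ((measurable_const.sub measurable_id).div_const μ)
  have m2 : Measurable fun s : ℝ => Real.sign (ξ - s) :=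
    sign_measurable.comp (measurable_const.sub measurable_id)
  have m3 : Measurable fun s : ℝ => Real.sinh ((L - |ξ - s|) / μ) :=
    Real.continuous_sinh.measurable.comp
      ((measurable_const.sub (measurable_const.sub measurable_id).abs).div_const μ)
  exact ((m1.add (m2.mul m3)).div_const _).const_mul _

lemma Kt_bound {L β μ : ℝ} (hL : 0 < L) (hβ : 0 < β) (hμ : 0 < μ) {ξ s : ℝ}
    (hξ : ξ ∈ Icc 0 L) (hs : s ∈ Icc 0 L) : |Kt L β μ ξ s| ≤ 6 / β := by
  obtain ⟨hξ0, hξL⟩ := hξ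
  obtain ⟨hs0, hsL⟩ := hs
  have hsh : 0 < Real.sinh (L / μ) := Real.sinh_pos_iff.2 (div_pos hL hμ)
  have key : ∀ x : ℝ, |x| ≤ L → |Real.sinh (x / μ)| ≤ Real.sinh (L / μ) := by
    intro x hx
    rw [Real.abs_sinh]
    apply Real.sinh_le_sinh.2
    rw [abs_div, abs_of_pos hμ]
    gcongr
  have h1 : |Real.sinh ((L - ξ - s) / μ)| ≤ Real.sinh (L / μ) :=
    key _ (abs_le.2 ⟨by linarith, by linarith⟩)
  have h2 : |Real.sinh ((L - |ξ - s|) / μ)| ≤ Real.sinh (L / μ) := by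
    have habs : |ξ - s| ≤ L := abs_le.2 ⟨by linarith, by linarith⟩
    exact key _ (abs_le.2 ⟨by linarith [abs_nonneg (ξ - s)], by linarith [abs_nonneg (ξ - s)]⟩)
  have hnum : |Real.sinh ((L - ξ - s) / μ) +
      Real.sign (ξ - s) * Real.sinh ((L - |ξ - s|) / μ)| ≤ 2 * Real.sinh (L / μ) := by
    calc |Real.sinh ((L - ξ - s) / μ) + Real.sign (ξ - s) * Real.sinh ((L - |ξ - s|) / μ)|
        ≤ |Real.sinh ((L - ξ - s) / μ)| + |Real.sign (ξ - s)| * |Real.sinh ((L - |ξ - s|) / μ)| := by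
          rw [← abs_mul]; exact abs_add_le _ _
      _ ≤ Real.sinh (L / μ) + 1 * Real.sinh (L / μ) := by
          gcongr
          exact sign_abs_le _
      _ = 2 * Real.sinh (L / μ) := by ring
  calc |Kt L β μ ξ s| = 3 / β * (|Real.sinh ((L - ξ - s) / μ) +
        Real.sign (ξ - s) * Real.sinh ((L - |ξ - s|) / μ)| / Real.sinh (L / μ)) := by
        rw [Kt, abs_mul, abs_of_pos (by positivity : (0:ℝ) < 3 / β), abs_div, abs_of_pos hsh]
    _ ≤ 3 / β * (2 * Real.sinh (L / μ) / Real.sinh (L / μ)) := by gcongr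
    _ = 6 / β := by field_simp; ring

lemma Kt_continuousAt {L β μ : ℝ} {s ξ₀ : ℝ} (h : s ≠ ξ₀) :
    ContinuousAt (fun ξ => Kt L β μ ξ s) ξ₀ := by
  have c1 : ContinuousAt (fun ξ : ℝ => Real.sinh ((L - ξ - s) / μ)) ξ₀ :=
    (Real.continuous_sinh.comp
      (((continuous_const.sub continuous_id).sub continuous_const).div_const μ)).continuousAt
  have c2 : ContinuousAt (fun ξ : ℝ => Real.sign (ξ - s)) ξ₀ :=
    ContinuousAt.comp (f := fun ξ : ℝ => ξ - s) (x := ξ₀)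
      (sign_continuousAt (sub_ne_zero.2 h.symm)) ((continuous_sub_right s).continuousAt)
  have c3 : ContinuousAt (fun ξ : ℝ => Real.sinh ((L - |ξ - s|) / μ)) ξ₀ :=
    (Real.continuous_sinh.comp
      ((continuous_const.sub (continuous_id.sub continuous_const).abs).div_const μ)).continuousAt
  exact ((c1.add (c2.mul c3)).div_const _).const_mul _

lemma Kt_left {L β μ : ℝ} {s : ℝ} (hs : 0 < s) : Kt L β μ 0 s = 0 := by
  have h1 : Real.sign (0 - s) = -1 := by
    rw [zero_sub, Real.sign_neg, Real.sign_of_pos hs]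
  have h2 : |(0:ℝ) - s| = s := by rw [zero_sub, abs_neg, abs_of_pos hs]
  rw [Kt, h1, h2]
  have h3 : L - 0 - s = L - s := by ring
  rw [h3]
  ring

lemma Kt_right {L β μ : ℝ} {s : ℝ} (hs : 0 < s) (hsL : s < L) : Kt L β μ L s = 0 := by
  have h1 : Real.sign (L - s) = 1 := Real.sign_of_pos (by linarith)
  have h2 : |L - s| = L - s := abs_of_pos (by linarith)
  rw [Kt, h1, h2, one_mul]
  have e1 : (L - L - s) / μ = -(s / μ) := by ring
  have e2 : (L - (L - s)) / μ = s / μ := by ring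
  rw [e1, e2, Real.sinh_neg]
  ring



section Machine

variable {k : ℝ → ℝ → ℝ} {g : ℝ → ℝ → ℝ} {L Kb Bg : ℝ} {pq : ℝ → ℝ}

/-- Integrability of the inner integrand. -/
lemma inner_integrable (hL : 0 < L)
    (hmeas : ∀ x, Measurable (k x))
    (hbd : ∀ x ∈ Icc (0:ℝ) L, ∀ s ∈ Icc (0:ℝ) L, |k x s| ≤ Kb)
    (hg : Continuous (uncurry g)) (hgb : ∀ s τ, |g s τ| ≤ Bg)
    {x : ℝ} (hx : x ∈ Icc (0:ℝ) L) (τ : ℝ) :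
    IntervalIntegrable (fun s => k x s * g s τ) volume 0 L := by
  have hBg : 0 ≤ Bg := le_trans (abs_nonneg _) (hgb 0 τ)
  have hKb : 0 ≤ Kb := le_trans (abs_nonneg _) (hbd x hx x hx)
  rw [intervalIntegrable_iff, uIoc_of_le hL.le]
  apply Measure.integrableOn_of_bounded (M := Kb * Bg)
  · exact (measure_Ioc_lt_top).ne
  · exact ((hmeas x).mul
      ((hg.comp (continuous_id.prodMk continuous_const)).measurable)).aestronglyMeasurable
  · apply ae_restrict_of_forall_mem measurableSet_Ioc
    intro s hs
    have hs' : s ∈ Icc (0:ℝ) L := Ioc_subset_Icc_self hs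
    rw [Real.norm_eq_abs, abs_mul]
    exact mul_le_mul (hbd x hx s hs') (hgb s τ) (abs_nonneg _) hKb

/-- Bound for the inner integral. -/
lemma inner_bound (hL : 0 < L)
    (hbd : ∀ x ∈ Icc (0:ℝ) L, ∀ s ∈ Icc (0:ℝ) L, |k x s| ≤ Kb)
    (hgb : ∀ s τ, |g s τ| ≤ Bg)
    {x : ℝ} (hx : x ∈ Icc (0:ℝ) L) (τ : ℝ) :
    |∫ s in (0:ℝ)..L, k x s * g s τ| ≤ Kb * Bg * L := by
  have hBg : 0 ≤ Bg := le_trans (abs_nonneg _) (hgb 0 τ)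
  have hKb : 0 ≤ Kb := le_trans (abs_nonneg _) (hbd x hx x hx)
  have h := intervalIntegral.norm_integral_le_of_norm_le_const
    (C := Kb * Bg) (f := fun s => k x s * g s τ) (a := (0:ℝ)) (b := L) ?_
  · rw [Real.norm_eq_abs] at h
    calc |∫ s in (0:ℝ)..L, k x s * g s τ| ≤ Kb * Bg * |L - 0| := h
      _ = Kb * Bg * L := by rw [sub_zero, abs_of_pos hL]
  · intro s hs
    rw [uIoc_of_le hL.le] at hs
    have hs' : s ∈ Icc (0:ℝ) L := Ioc_subset_Icc_self hs
    rw [Real.norm_eq_abs, abs_mul]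
    exact mul_le_mul (hbd x hx s hs') (hgb s τ) (abs_nonneg _) hKb

/-- Joint continuity of the inner integral. -/
lemma inner_continuous (hL : 0 < L)
    (hmeas : ∀ x, Measurable (k x))
    (hbd : ∀ x ∈ Icc (0:ℝ) L, ∀ s ∈ Icc (0:ℝ) L, |k x s| ≤ Kb)
    (hcont : ∀ (s x₀ : ℝ), s ≠ x₀ → ContinuousAt (fun x => k x s) x₀)
    (hg : Continuous (uncurry g)) (hgb : ∀ s τ, |g s τ| ≤ Bg)
    (hpq : Continuous pq) (hpqm : ∀ x, pq x ∈ Icc (0:ℝ) L) :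
    Continuous fun p : ℝ × ℝ => ∫ s in (0:ℝ)..L, k (pq p.1) s * g s p.2 := by
  rw [continuous_iff_continuousAt]
  intro p₀
  apply intervalIntegral.continuousAt_of_dominated_interval (bound := fun _ => Kb * Bg)
  · apply Eventually.of_forall
    intro p
    exact (((hmeas (pq p.1)).mul
      ((hg.comp (continuous_id.prodMk continuous_const)).measurable)).aestronglyMeasurable).restrict
  · apply Eventually.of_forall
    intro p
    apply Eventually.of_forall
    intro s hs
    rw [uIoc_of_le hL.le] at hs
    have hs' : s ∈ Icc (0:ℝ) L := Ioc_subset_Icc_self hs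
    have hKb : 0 ≤ Kb := le_trans (abs_nonneg _) (hbd _ (hpqm p.1) _ (hpqm p.1))
    rw [Real.norm_eq_abs, abs_mul]
    exact mul_le_mul (hbd _ (hpqm p.1) s hs') (hgb s p.2) (abs_nonneg _) hKb
  · exact intervalIntegrable_const
  · have hnull : (volume : Measure ℝ) {pq p₀.1} = 0 := measure_singleton _
    filter_upwards [compl_mem_ae_iff.2 hnull] with s hsne _
    have hne : s ≠ pq p₀.1 := by simpa using hsne
    apply ContinuousAt.mul
    · exact ContinuousAt.comp (f := fun p : ℝ × ℝ => pq p.1) (x := p₀)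
        (hcont s (pq p₀.1) hne) ((hpq.comp continuous_fst).continuousAt)
    · exact (hg.comp (continuous_const.prodMk continuous_snd)).continuousAt

/-- Joint continuity of the double integral. -/
lemma double_continuous (hL : 0 < L)
    (hmeas : ∀ x, Measurable (k x))
    (hbd : ∀ x ∈ Icc (0:ℝ) L, ∀ s ∈ Icc (0:ℝ) L, |k x s| ≤ Kb)
    (hcont : ∀ (s x₀ : ℝ), s ≠ x₀ → ContinuousAt (fun x => k x s) x₀)
    (hg : Continuous (uncurry g)) (hgb : ∀ s τ, |g s τ| ≤ Bg)
    (hpq : Continuous pq) (hpqm : ∀ x, pq x ∈ Icc (0:ℝ) L) :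
    Continuous fun p : ℝ × ℝ =>
      ∫ τ in (0:ℝ)..p.2, ∫ s in (0:ℝ)..L, k (pq p.1) s * g s τ := by
  have h : Continuous (uncurry fun x τ => ∫ s in (0:ℝ)..L, k (pq x) s * g s τ) :=
    inner_continuous hL hmeas hbd hcont hg hgb hpq hpqm
  exact intervalIntegral.continuous_parametric_primitive_of_continuous h

/-- Bound for the double integral. -/
lemma double_bound (hL : 0 < L)
    (hbd : ∀ x ∈ Icc (0:ℝ) L, ∀ s ∈ Icc (0:ℝ) L, |k x s| ≤ Kb)
    (hgb : ∀ s τ, |g s τ| ≤ Bg)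
    {x : ℝ} (hx : x ∈ Icc (0:ℝ) L) {t : ℝ} (ht : 0 ≤ t) :
    |∫ τ in (0:ℝ)..t, ∫ s in (0:ℝ)..L, k x s * g s τ| ≤ Kb * Bg * L * t := by
  have h := intervalIntegral.norm_integral_le_of_norm_le_const
    (C := Kb * Bg * L) (f := fun τ => ∫ s in (0:ℝ)..L, k x s * g s τ) (a := (0:ℝ)) (b := t) ?_
  · rw [Real.norm_eq_abs] at h
    calc |∫ τ in (0:ℝ)..t, ∫ s in (0:ℝ)..L, k x s * g s τ| ≤ Kb * Bg * L * |t - 0| := h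
      _ = Kb * Bg * L * t := by rw [sub_zero, abs_of_nonneg ht]
  · intro τ _
    rw [Real.norm_eq_abs]
    exact inner_bound hL hbd hgb hx τ

/-- Subtraction of double integrals. -/
lemma double_sub (hL : 0 < L)
    (hmeas : ∀ x, Measurable (k x))
    (hbd : ∀ x ∈ Icc (0:ℝ) L, ∀ s ∈ Icc (0:ℝ) L, |k x s| ≤ Kb)
    (hcont : ∀ (s x₀ : ℝ), s ≠ x₀ → ContinuousAt (fun x => k x s) x₀)
    {g' : ℝ → ℝ → ℝ} {Bg' : ℝ}
    (hg : Continuous (uncurry g)) (hgb : ∀ s τ, |g s τ| ≤ Bg)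
    (hg' : Continuous (uncurry g')) (hgb' : ∀ s τ, |g' s τ| ≤ Bg')
    {x : ℝ} (hx : x ∈ Icc (0:ℝ) L) (t : ℝ) :
    (∫ τ in (0:ℝ)..t, ∫ s in (0:ℝ)..L, k x s * g s τ) -
      (∫ τ in (0:ℝ)..t, ∫ s in (0:ℝ)..L, k x s * g' s τ) =
    ∫ τ in (0:ℝ)..t, ∫ s in (0:ℝ)..L, k x s * (g s τ - g' s τ) := by
  have hco : ∀ (h : ℝ → ℝ → ℝ), Continuous (uncurry h) → (∀ s τ, |h s τ| ≤ Bg + Bg' + |Bg| + |Bg'|) →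
      Continuous fun τ => ∫ s in (0:ℝ)..L, k x s * h s τ := by
    intro h hc hb
    have := inner_continuous (pq := fun _ => x) hL hmeas hbd hcont hc hb
      continuous_const (fun _ => hx)
    exact this.comp ((continuous_const : Continuous fun _ : ℝ => (0:ℝ)).prodMk continuous_id)
  have hb1 : ∀ s τ, |g s τ| ≤ Bg + Bg' + |Bg| + |Bg'| := fun s τ =>
    le_trans (hgb s τ) (by cases abs_cases Bg <;> cases abs_cases Bg' <;> linarith)
  have hb1' : ∀ s τ, |g' s τ| ≤ Bg + Bg' + |Bg| + |Bg'| := fun s τ =>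
    le_trans (hgb' s τ) (by cases abs_cases Bg <;> cases abs_cases Bg' <;> linarith)
  rw [← intervalIntegral.integral_sub
      ((hco g hg hb1).intervalIntegrable 0 t) ((hco g' hg' hb1').intervalIntegrable 0 t)]
  apply intervalIntegral.integral_congr
  intro τ _
  simp only
  rw [← intervalIntegral.integral_sub (inner_integrable hL hmeas hbd hg hgb hx τ)
      (inner_integrable hL hmeas hbd hg' hgb' hx τ)]
  apply intervalIntegral.integral_congr
  intro s _
  simp only
  ring

end Machine



lemma est1b {a n v R A : ℝ} (ha : 0 ≤ a) (haA : a ≤ A) (hn : |n| ≤ R) (hv : |v| ≤ R)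
    (hR : 0 ≤ R) : |(1 + a * n) * v| ≤ (1 + A * R) * R := by
  have hA : 0 ≤ A := le_trans ha haA
  rw [abs_mul]
  apply mul_le_mul _ hv (abs_nonneg _) (by positivity)
  calc |1 + a * n| ≤ |1| + |a * n| := abs_add_le _ _
    _ = 1 + a * |n| := by rw [abs_one, abs_mul, abs_of_nonneg ha]
    _ ≤ 1 + A * R := by gcongr

lemma est2b {cs h n v R Mc : ℝ} (hcs : |cs| ≤ Mc) (hh : 0 ≤ h) (hn : |n| ≤ R) (hv : |v| ≤ R)
    (hR : 0 ≤ R) : |cs * n + h * cs ^ 2 * v ^ 2| ≤ Mc * R + h * Mc ^ 2 * R ^ 2 := by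
  have hMc : 0 ≤ Mc := le_trans (abs_nonneg _) hcs
  calc |cs * n + h * cs ^ 2 * v ^ 2| ≤ |cs * n| + |h * cs ^ 2 * v ^ 2| := abs_add_le _ _
    _ = |cs| * |n| + h * |cs| ^ 2 * |v| ^ 2 := by
        rw [abs_mul, abs_mul, abs_mul, abs_of_nonneg hh, abs_pow, abs_pow]
    _ ≤ Mc * R + h * Mc ^ 2 * R ^ 2 := by gcongr

lemma est1 {a n v n' v' d R A : ℝ} (ha : 0 ≤ a) (haA : a ≤ A) (hn : |n| ≤ R) (hv' : |v'| ≤ R)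
    (hdn : |n - n'| ≤ d) (hdv : |v - v'| ≤ d) (hR : 0 ≤ R) :
    |(1 + a * n) * v - (1 + a * n') * v'| ≤ (1 + 2 * A * R) * d := by
  have hA : 0 ≤ A := le_trans ha haA
  have hd : 0 ≤ d := le_trans (abs_nonneg _) hdv
  have key : (1 + a * n) * v - (1 + a * n') * v'
      = (v - v') + a * (n * (v - v') + v' * (n - n')) := by ring
  rw [key]
  calc |(v - v') + a * (n * (v - v') + v' * (n - n'))|
      ≤ |v - v'| + a * (|n| * |v - v'| + |v'| * |n - n'|) := by
        refine (abs_add_le _ _).trans ?_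
        gcongr
        rw [abs_mul, abs_of_nonneg ha]
        gcongr
        refine (abs_add_le _ _).trans ?_
        rw [abs_mul, abs_mul]
    _ ≤ d + A * (R * d + R * d) := by gcongr
    _ = (1 + 2 * A * R) * d := by ring

lemma est2 {cs h n v n' v' d R Mc : ℝ} (hcs : |cs| ≤ Mc) (hh : 0 ≤ h)
    (hv : |v| ≤ R) (hv' : |v'| ≤ R) (hdn : |n - n'| ≤ d) (hdv : |v - v'| ≤ d) (hR : 0 ≤ R) :
    |cs * n + h * cs ^ 2 * v ^ 2 - (cs * n' + h * cs ^ 2 * v' ^ 2)|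
      ≤ (Mc + 2 * h * Mc ^ 2 * R) * d := by
  have hMc : 0 ≤ Mc := le_trans (abs_nonneg _) hcs
  have hd : 0 ≤ d := le_trans (abs_nonneg _) hdv
  have key : cs * n + h * cs ^ 2 * v ^ 2 - (cs * n' + h * cs ^ 2 * v' ^ 2)
      = cs * (n - n') + h * cs ^ 2 * ((v + v') * (v - v')) := by ring
  rw [key]
  have hvv : |v + v'| ≤ 2 * R := (abs_add_le _ _).trans (by linarith)
  calc |cs * (n - n') + h * cs ^ 2 * ((v + v') * (v - v'))|
      ≤ |cs| * |n - n'| + h * |cs| ^ 2 * (|v + v'| * |v - v'|) := by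
        refine (abs_add_le _ _).trans ?_
        rw [abs_mul, abs_mul, abs_mul, abs_of_nonneg hh, abs_pow, abs_mul]
    _ ≤ Mc * d + h * Mc ^ 2 * (2 * R * d) := by gcongr
    _ = (Mc + 2 * h * Mc ^ 2 * R) * d := by ring


end BoussinesqAux


open BoussinesqAux

set_option maxHeartbeats 2000000 in
/-- Local existence for the Green's-function (Duhamel) reformulation of the
variable-coefficient Boussinesq system: for C¹ initial data vanishing at the
endpoints, there exist `T₀ ∈ (0,T]` and continuous functions `N, V` solving the
coupled integral system and satisfying the homogeneous Dirichlet boundary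
conditions. -/
theorem boussinesq_integral_system_local_existence
    (L T α β : ℝ) (hL : 0 < L) (hT : 0 < T) (hα : 0 < α) (hβ : 0 < β)
    (μ : ℝ) (hμ : μ = Real.sqrt (β / 6))
    (K : ℝ → ℝ → ℝ)
    (hK : ∀ ξ s : ℝ, ξ ≠ s → K ξ s =
      (3 / β) * ((Real.sinh ((L - ξ - s) / μ) +
        Real.sign (ξ - s) * Real.sinh ((L - |ξ - s|) / μ)) / Real.sinh (L / μ)))
    (c : ℝ → ℝ) (hc : ContinuousOn c (Set.Icc (0 : ℝ) L))
    (N₀ V₀ : ℝ → ℝ)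
    (hN₀ : ContDiffOn ℝ 1 N₀ (Set.Icc (0 : ℝ) L))
    (hV₀ : ContDiffOn ℝ 1 V₀ (Set.Icc (0 : ℝ) L))
    (hN₀0 : N₀ 0 = 0) (hN₀L : N₀ L = 0) (hV₀0 : V₀ 0 = 0) (hV₀L : V₀ L = 0) :
    ∃ T₀ : ℝ, 0 < T₀ ∧ T₀ ≤ T ∧
      ∃ N V : ℝ → ℝ → ℝ,
        ContinuousOn (Function.uncurry N) (Set.Icc (0 : ℝ) L ×ˢ Set.Icc (0 : ℝ) T₀) ∧
        ContinuousOn (Function.uncurry V) (Set.Icc (0 : ℝ) L ×ˢ Set.Icc (0 : ℝ) T₀) ∧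
        (∀ ξ ∈ Set.Icc (0 : ℝ) L, ∀ t ∈ Set.Icc (0 : ℝ) T₀,
          N ξ t = N₀ ξ + ∫ τ in (0 : ℝ)..t, ∫ s in (0 : ℝ)..L,
              K ξ s * ((1 + α * c s ^ 2 * N s τ) * V s τ) ∧
          V ξ t = V₀ ξ + ∫ τ in (0 : ℝ)..t, ∫ s in (0 : ℝ)..L,
              K ξ s * (c s * N s τ + α / 2 * c s ^ 2 * V s τ ^ 2)) ∧
        (∀ t ∈ Set.Icc (0 : ℝ) T₀,
          N 0 t = 0 ∧ N L t = 0 ∧ V 0 t = 0 ∧ V L t = 0) := by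
  classical
  -- positivity of μ
  have hμ0 : 0 < μ := by rw [hμ]; exact Real.sqrt_pos.2 (by positivity)
  -- continuity of the initial data
  have hN₀c : ContinuousOn N₀ (Icc (0:ℝ) L) := hN₀.continuousOn
  have hV₀c : ContinuousOn V₀ (Icc (0:ℝ) L) := hV₀.continuousOn
  -- bounds
  obtain ⟨Mc', hMc'⟩ := isCompact_Icc.exists_bound_of_continuousOn hc
  obtain ⟨MN, hMN⟩ := isCompact_Icc.exists_bound_of_continuousOn hN₀c
  obtain ⟨MV, hMV⟩ := isCompact_Icc.exists_bound_of_continuousOn hV₀c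
  set Mc : ℝ := max Mc' 0 with hMcdef
  have hMc0 : 0 ≤ Mc := le_max_right _ _
  set M₀ : ℝ := max (max MN MV) 0 with hM₀def
  have hM₀0 : 0 ≤ M₀ := le_max_right _ _
  set R : ℝ := M₀ + 1 with hRdef
  have hR0 : 0 < R := by positivity
  set Kb : ℝ := 6 / β with hKbdef
  have hKb0 : 0 < Kb := by positivity
  set B : ℝ := R + α * Mc ^ 2 * R ^ 2 + Mc * R + α / 2 * Mc ^ 2 * R ^ 2 + 1 with hBdef
  have hB0 : 0 < B := by positivity
  set Λ : ℝ := 1 + Mc + 3 * α * Mc ^ 2 * R with hΛdef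
  have hΛ0 : 0 < Λ := by positivity
  set T₀ : ℝ := min T (min (1 / (Kb * B * L + 1)) (1 / (2 * (Kb * Λ * L + 1)))) with hT₀def
  have hT₀ : 0 < T₀ := lt_min hT (lt_min (by positivity) (by positivity))
  have hT₀T : T₀ ≤ T := min_le_left _ _
  have key1 : Kb * B * L * T₀ ≤ 1 := by
    have h1 : T₀ ≤ 1 / (Kb * B * L + 1) := le_trans (min_le_right _ _) (min_le_left _ _)
    have h2 : 0 ≤ Kb * B * L := by positivity
    calc Kb * B * L * T₀ ≤ (Kb * B * L) * (1 / (Kb * B * L + 1)) := by gcongr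
      _ = (Kb * B * L) / (Kb * B * L + 1) := by ring
      _ ≤ 1 := by rw [div_le_one (by positivity)]; linarith
  have key2 : Kb * Λ * L * T₀ ≤ 1 / 2 := by
    have h1 : T₀ ≤ 1 / (2 * (Kb * Λ * L + 1)) := le_trans (min_le_right _ _) (min_le_right _ _)
    have h2 : 0 ≤ Kb * Λ * L := by positivity
    calc Kb * Λ * L * T₀ ≤ (Kb * Λ * L) * (1 / (2 * (Kb * Λ * L + 1))) := by gcongr
      _ = (Kb * Λ * L) / (2 * (Kb * Λ * L + 1)) := by ring
      _ ≤ 1 / 2 := by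
          rw [div_le_div_iff₀ (by positivity) (by norm_num)]
          linarith
  have hx1 : (0:ℝ) ≤ α * Mc ^ 2 * R := by positivity
  have hx2 : (0:ℝ) ≤ Mc * R := by positivity
  have hx3 : (0:ℝ) ≤ α / 2 * Mc ^ 2 * R ^ 2 := by positivity
  have hKBLB : (0:ℝ) < Kb * B * L := by positivity
  have hKBLΛ : (0:ℝ) < Kb * Λ * L := by positivity
  -- kernel facts
  have kmeas : ∀ x, Measurable (Kt L β μ x) := Kt_measurable L β μ
  have kbd : ∀ x ∈ Icc (0:ℝ) L, ∀ s ∈ Icc (0:ℝ) L, |Kt L β μ x s| ≤ Kb :=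
    fun x hx s hs => Kt_bound hL hβ hμ0 hx hs
  have kcont : ∀ (s x₀ : ℝ), s ≠ x₀ → ContinuousAt (fun x => Kt L β μ x s) x₀ :=
    fun s x₀ h => Kt_continuousAt h
  -- projections
  set pL : ℝ → Icc (0:ℝ) L := projIcc 0 L hL.le with hpLdef
  set pT : ℝ → Icc (0:ℝ) T₀ := projIcc 0 T₀ hT₀.le with hpTdef
  have hpLc : Continuous fun x : ℝ => ((pL x : ℝ)) :=
    continuous_subtype_val.comp continuous_projIcc
  have hpLm : ∀ x, ((pL x : ℝ)) ∈ Icc (0:ℝ) L := fun x => (pL x).2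
  -- extended coefficient
  set cc : ℝ → ℝ := fun s => c ((pL s : ℝ)) with hccdef
  have hccb : ∀ s, |cc s| ≤ Mc := fun s =>
    le_trans (by simpa [Real.norm_eq_abs] using hMc' _ (hpLm s)) (le_max_left _ _)
  have hcccont : Continuous cc := hc.comp_continuous hpLc hpLm
  have hcc2 : ∀ s, cc s ^ 2 ≤ Mc ^ 2 := fun s => by
    rw [← sq_abs]; exact pow_le_pow_left₀ (abs_nonneg _) (hccb s) 2
  clear_value Mc M₀ R Kb B Λ T₀
  -- the function space
  let X := ContinuousMap (Icc (0:ℝ) L × Icc (0:ℝ) T₀) (ℝ × ℝ)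
  -- evaluations
  set nn : X → ℝ → ℝ → ℝ := fun u s τ => (u (pL s, pT τ)).1 with hnndef
  set vv : X → ℝ → ℝ → ℝ := fun u s τ => (u (pL s, pT τ)).2 with hvvdef
  have hpp : Continuous fun p : ℝ × ℝ => ((pL p.1, pT p.2) : Icc (0:ℝ) L × Icc (0:ℝ) T₀) :=
    (continuous_projIcc.comp continuous_fst).prodMk (continuous_projIcc.comp continuous_snd)
  have hnnc : ∀ u : X, Continuous (uncurry (nn u)) := fun u =>
    continuous_fst.comp (u.continuous.comp hpp)
  have hvvc : ∀ u : X, Continuous (uncurry (vv u)) := fun u =>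
    continuous_snd.comp (u.continuous.comp hpp)
  have hnnb : ∀ u : X, ∀ s τ, |nn u s τ| ≤ ‖u‖ := fun u s τ => by
    calc |nn u s τ| ≤ ‖u (pL s, pT τ)‖ := by
          rw [← Real.norm_eq_abs]; exact norm_fst_le _
      _ ≤ ‖u‖ := u.norm_coe_le_norm _
  have hvvb : ∀ u : X, ∀ s τ, |vv u s τ| ≤ ‖u‖ := fun u s τ => by
    calc |vv u s τ| ≤ ‖u (pL s, pT τ)‖ := by
          rw [← Real.norm_eq_abs]; exact norm_snd_le _
      _ ≤ ‖u‖ := u.norm_coe_le_norm _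
  -- the two nonlinearities
  set G1 : X → ℝ → ℝ → ℝ := fun u s τ => (1 + α * cc s ^ 2 * nn u s τ) * vv u s τ with hG1def
  set G2 : X → ℝ → ℝ → ℝ := fun u s τ =>
    cc s * nn u s τ + α / 2 * cc s ^ 2 * vv u s τ ^ 2 with hG2def
  have hG1c : ∀ u : X, Continuous (uncurry (G1 u)) := fun u => by
    have : Continuous fun p : ℝ × ℝ =>
        (1 + α * cc p.1 ^ 2 * uncurry (nn u) p) * uncurry (vv u) p :=
      (continuous_const.add ((continuous_const.mul
        ((hcccont.comp continuous_fst).pow 2)).mul (hnnc u))).mul (hvvc u)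
    exact this
  have hG2c : ∀ u : X, Continuous (uncurry (G2 u)) := fun u => by
    have : Continuous fun p : ℝ × ℝ =>
        cc p.1 * uncurry (nn u) p + α / 2 * cc p.1 ^ 2 * uncurry (vv u) p ^ 2 :=
      ((hcccont.comp continuous_fst).mul (hnnc u)).add
        ((continuous_const.mul ((hcccont.comp continuous_fst).pow 2)).mul ((hvvc u).pow 2))
    exact this
  have hG1b : ∀ u : X, ∀ s τ, |G1 u s τ| ≤ (1 + α * Mc ^ 2 * ‖u‖) * ‖u‖ := fun u s τ =>
    est1b (by positivity) (by nlinarith [hcc2 s, sq_nonneg (cc s)])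
      (hnnb u s τ) (hvvb u s τ) (norm_nonneg u)
  have hG2b : ∀ u : X, ∀ s τ, |G2 u s τ| ≤ Mc * ‖u‖ + α / 2 * Mc ^ 2 * ‖u‖ ^ 2 := fun u s τ =>
    est2b (hccb s) (by positivity) (hnnb u s τ) (hvvb u s τ) (norm_nonneg u)
  -- the double integral operator
  set Jd : (ℝ → ℝ → ℝ) → ℝ × ℝ → ℝ := fun g p =>
    ∫ τ in (0:ℝ)..p.2, ∫ s in (0:ℝ)..L, Kt L β μ ((pL p.1 : ℝ)) s * g s τ with hJddef
  -- the base point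
  have hu₀cont : Continuous fun q : Icc (0:ℝ) L × Icc (0:ℝ) T₀ =>
      ((N₀ (q.1 : ℝ), V₀ (q.1 : ℝ)) : ℝ × ℝ) :=
    (hN₀c.comp_continuous (continuous_subtype_val.comp continuous_fst) fun q => q.1.2).prodMk
      (hV₀c.comp_continuous (continuous_subtype_val.comp continuous_fst) fun q => q.1.2)
  set u₀ : X := ⟨_, hu₀cont⟩ with hu₀def
  -- the Picard map
  have hΦcont : ∀ u : X, Continuous fun q : Icc (0:ℝ) L × Icc (0:ℝ) T₀ =>
      ((N₀ (q.1 : ℝ) + Jd (G1 u) ((q.1 : ℝ), (q.2 : ℝ)),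
        V₀ (q.1 : ℝ) + Jd (G2 u) ((q.1 : ℝ), (q.2 : ℝ))) : ℝ × ℝ) := by
    intro u
    have hemb : Continuous fun q : Icc (0:ℝ) L × Icc (0:ℝ) T₀ =>
        (((q.1 : ℝ), (q.2 : ℝ)) : ℝ × ℝ) :=
      (continuous_subtype_val.comp continuous_fst).prodMk
        (continuous_subtype_val.comp continuous_snd)
    have h1 : Continuous (Jd (G1 u)) := by
      have := double_continuous (k := Kt L β μ) (g := G1 u)
        (pq := fun x : ℝ => ((pL x : ℝ))) hL kmeas kbd kcont (hG1c u) (hG1b u) hpLc hpLm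
      exact this
    have h2 : Continuous (Jd (G2 u)) := by
      have := double_continuous (k := Kt L β μ) (g := G2 u)
        (pq := fun x : ℝ => ((pL x : ℝ))) hL kmeas kbd kcont (hG2c u) (hG2b u) hpLc hpLm
      exact this
    exact ((hN₀c.comp_continuous (continuous_subtype_val.comp continuous_fst)
        fun q => q.1.2).add (h1.comp hemb)).prodMk
      ((hV₀c.comp_continuous (continuous_subtype_val.comp continuous_fst)
        fun q => q.1.2).add (h2.comp hemb))
  set Φ : X → X := fun u => ⟨_, hΦcont u⟩ with hΦdef
  -- norm of the base point
  have hu₀norm : ‖u₀‖ ≤ M₀ := by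
    apply (ContinuousMap.norm_le _ hM₀0).2
    intro q
    rw [Prod.norm_def]
    apply max_le
    · rw [hM₀def]
      exact le_trans (hMN _ q.1.2) (le_trans (le_max_left _ _) (le_max_left _ _))
    · rw [hM₀def]
      exact le_trans (hMV _ q.1.2) (le_trans (le_max_right _ _) (le_max_left _ _))
  -- pointwise bounds on the closed ball
  set S : Set X := Metric.closedBall u₀ 1 with hSdef
  have hSc : IsComplete S := Metric.isClosed_closedBall.isComplete
  have hu₀S : u₀ ∈ S := Metric.mem_closedBall_self zero_le_one
  have hnorm : ∀ u ∈ S, ∀ q, ‖u q‖ ≤ R := by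
    intro u hu q
    have h1 : dist (u q) (u₀ q) ≤ 1 :=
      le_trans (ContinuousMap.dist_apply_le_dist q) (Metric.mem_closedBall.1 hu)
    calc ‖u q‖ = ‖u₀ q + (u q - u₀ q)‖ := by congr 1; abel
      _ ≤ ‖u₀ q‖ + ‖u q - u₀ q‖ := norm_add_le _ _
      _ ≤ M₀ + 1 := by
          apply add_le_add
          · exact le_trans (u₀.norm_coe_le_norm q) hu₀norm
          · rw [← dist_eq_norm]; exact h1
      _ = R := hRdef.symm
  have hnnR : ∀ u ∈ S, ∀ s τ, |nn u s τ| ≤ R := fun u hu s τ => by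
    calc |nn u s τ| ≤ ‖u (pL s, pT τ)‖ := by rw [← Real.norm_eq_abs]; exact norm_fst_le _
      _ ≤ R := hnorm u hu _
  have hvvR : ∀ u ∈ S, ∀ s τ, |vv u s τ| ≤ R := fun u hu s τ => by
    calc |vv u s τ| ≤ ‖u (pL s, pT τ)‖ := by rw [← Real.norm_eq_abs]; exact norm_snd_le _
      _ ≤ R := hnorm u hu _
  -- bounds for the nonlinearities on the ball
  have haA : ∀ s : ℝ, α * cc s ^ 2 ≤ α * Mc ^ 2 := fun s =>
    mul_le_mul_of_nonneg_left (hcc2 s) hα.le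
  have hG1B : ∀ u ∈ S, ∀ s τ, |G1 u s τ| ≤ B := by
    intro u hu s τ
    have h1 := est1b (mul_nonneg hα.le (sq_nonneg _)) (haA s) (hnnR u hu s τ) (hvvR u hu s τ) hR0.le
    simp only [hG1def]
    rw [hBdef]; linarith
  have hG2B : ∀ u ∈ S, ∀ s τ, |G2 u s τ| ≤ B := by
    intro u hu s τ
    have h1 := est2b (hccb s) (by linarith : (0:ℝ) ≤ α / 2) (hnnR u hu s τ) (hvvR u hu s τ) hR0.le
    simp only [hG2def]
    rw [hBdef]; linarith
  -- Lipschitz estimates for the nonlinearities on the ball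
  have hdmem : ∀ u ∈ S, ∀ u' ∈ S, ∀ s τ,
      |nn u s τ - nn u' s τ| ≤ dist u u' ∧ |vv u s τ - vv u' s τ| ≤ dist u u' := by
    intro u hu u' hu' s τ
    have h1 : dist (u (pL s, pT τ)) (u' (pL s, pT τ)) ≤ dist u u' :=
      ContinuousMap.dist_apply_le_dist _
    constructor
    · calc |nn u s τ - nn u' s τ| = dist (u (pL s, pT τ)).1 (u' (pL s, pT τ)).1 := by
            rw [Real.dist_eq]
        _ ≤ dist (u (pL s, pT τ)) (u' (pL s, pT τ)) := by
            rw [Prod.dist_eq]; exact le_max_left _ _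
        _ ≤ dist u u' := h1
    · calc |vv u s τ - vv u' s τ| = dist (u (pL s, pT τ)).2 (u' (pL s, pT τ)).2 := by
            rw [Real.dist_eq]
        _ ≤ dist (u (pL s, pT τ)) (u' (pL s, pT τ)) := by
            rw [Prod.dist_eq]; exact le_max_right _ _
        _ ≤ dist u u' := h1
  have hG1L : ∀ u ∈ S, ∀ u' ∈ S, ∀ s τ,
      |G1 u s τ - G1 u' s τ| ≤ Λ * dist u u' := by
    intro u hu u' hu' s τ
    obtain ⟨hdn, hdv⟩ := hdmem u hu u' hu' s τ
    have h := est1 (mul_nonneg hα.le (sq_nonneg _)) (haA s) (hnnR u hu s τ) (hvvR u' hu' s τ) hdn hdv hR0.le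
    have h2 : (1 + 2 * (α * Mc ^ 2) * R) ≤ Λ := by
      rw [hΛdef]
      linarith [mul_nonneg (mul_nonneg hα.le (sq_nonneg Mc)) hR0.le, hMc0]
    calc |G1 u s τ - G1 u' s τ| ≤ (1 + 2 * (α * Mc ^ 2) * R) * dist u u' := h
      _ ≤ Λ * dist u u' := mul_le_mul_of_nonneg_right h2 dist_nonneg
  have hG2L : ∀ u ∈ S, ∀ u' ∈ S, ∀ s τ,
      |G2 u s τ - G2 u' s τ| ≤ Λ * dist u u' := by
    intro u hu u' hu' s τ
    obtain ⟨hdn, hdv⟩ := hdmem u hu u' hu' s τ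
    have h := est2 (hccb s) (by linarith : (0:ℝ) ≤ α / 2) (hvvR u hu s τ)
      (hvvR u' hu' s τ) hdn hdv hR0.le
    have h2 : (Mc + 2 * (α / 2) * Mc ^ 2 * R) ≤ Λ := by
      rw [hΛdef]
      linarith [mul_nonneg (mul_nonneg hα.le (sq_nonneg Mc)) hR0.le, hMc0]
    calc |G2 u s τ - G2 u' s τ| ≤ (Mc + 2 * (α / 2) * Mc ^ 2 * R) * dist u u' := h
      _ ≤ Λ * dist u u' := mul_le_mul_of_nonneg_right h2 dist_nonneg
  -- Φ maps S to S
  have hmaps : MapsTo Φ S S := by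
    intro u hu
    rw [hSdef, Metric.mem_closedBall]
    apply (ContinuousMap.dist_le zero_le_one).2
    intro q
    rw [Prod.dist_eq]
    have hJ1 : |Jd (G1 u) ((q.1 : ℝ), (q.2 : ℝ))| ≤ 1 := by
      have hb := double_bound (k := Kt L β μ) (g := G1 u) hL kbd
        (fun s τ => hG1B u hu s τ) (hpLm (q.1 : ℝ)) (q.2.2.1)
      have ht : ((q.2 : ℝ)) ≤ T₀ := q.2.2.2
      calc |Jd (G1 u) ((q.1 : ℝ), (q.2 : ℝ))| ≤ Kb * B * L * (q.2 : ℝ) := hb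
        _ ≤ Kb * B * L * T₀ := mul_le_mul_of_nonneg_left ht hKBLB.le
        _ ≤ 1 := key1
    have hJ2 : |Jd (G2 u) ((q.1 : ℝ), (q.2 : ℝ))| ≤ 1 := by
      have hb := double_bound (k := Kt L β μ) (g := G2 u) hL kbd
        (fun s τ => hG2B u hu s τ) (hpLm (q.1 : ℝ)) (q.2.2.1)
      have ht : ((q.2 : ℝ)) ≤ T₀ := q.2.2.2
      calc |Jd (G2 u) ((q.1 : ℝ), (q.2 : ℝ))| ≤ Kb * B * L * (q.2 : ℝ) := hb
        _ ≤ Kb * B * L * T₀ := mul_le_mul_of_nonneg_left ht hKBLB.le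
        _ ≤ 1 := key1
    apply max_le
    · show dist (N₀ (q.1 : ℝ) + Jd (G1 u) ((q.1 : ℝ), (q.2 : ℝ))) (N₀ (q.1 : ℝ)) ≤ 1
      rw [Real.dist_eq, add_sub_cancel_left]
      exact hJ1
    · show dist (V₀ (q.1 : ℝ) + Jd (G2 u) ((q.1 : ℝ), (q.2 : ℝ))) (V₀ (q.1 : ℝ)) ≤ 1
      rw [Real.dist_eq, add_sub_cancel_left]
      exact hJ2
  -- contraction estimate
  have hcontr : ∀ u ∈ S, ∀ u' ∈ S, dist (Φ u) (Φ u') ≤ 1 / 2 * dist u u' := by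
    intro u hu u' hu'
    have hd0 : (0:ℝ) ≤ dist u u' := dist_nonneg
    apply (ContinuousMap.dist_le (by positivity)).2
    intro q
    rw [Prod.dist_eq]
    have key : ∀ g g' : ℝ → ℝ → ℝ, Continuous (uncurry g) → Continuous (uncurry g') →
        (∀ s τ, |g s τ| ≤ B) → (∀ s τ, |g' s τ| ≤ B) →
        (∀ s τ, |g s τ - g' s τ| ≤ Λ * dist u u') →
        |Jd g ((q.1 : ℝ), (q.2 : ℝ)) - Jd g' ((q.1 : ℝ), (q.2 : ℝ))| ≤ 1 / 2 * dist u u' := by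
      intro g g' hgc hgc' hgB hgB' hgl
      have hsub := double_sub (k := Kt L β μ) hL kmeas kbd kcont hgc hgB hgc' hgB'
        (hpLm (q.1 : ℝ)) (q.2 : ℝ)
      have e1 : Jd g ((q.1 : ℝ), (q.2 : ℝ)) - Jd g' ((q.1 : ℝ), (q.2 : ℝ)) =
          ∫ τ in (0:ℝ)..(q.2 : ℝ), ∫ s in (0:ℝ)..L,
            Kt L β μ ((pL (q.1 : ℝ) : ℝ)) s * (g s τ - g' s τ) := hsub
      have hb := double_bound (k := Kt L β μ) (g := fun s τ => g s τ - g' s τ)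
        (Bg := Λ * dist u u') hL kbd hgl (hpLm (q.1 : ℝ)) (q.2.2.1)
      have ht : ((q.2 : ℝ)) ≤ T₀ := q.2.2.2
      calc |Jd g ((q.1 : ℝ), (q.2 : ℝ)) - Jd g' ((q.1 : ℝ), (q.2 : ℝ))|
          = |∫ τ in (0:ℝ)..(q.2 : ℝ), ∫ s in (0:ℝ)..L,
              Kt L β μ ((pL (q.1 : ℝ) : ℝ)) s * (g s τ - g' s τ)| := by rw [e1]
        _ ≤ Kb * (Λ * dist u u') * L * (q.2 : ℝ) := hb
        _ = Kb * Λ * L * (q.2 : ℝ) * dist u u' := by ring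
        _ ≤ 1 / 2 * dist u u' := by
            apply mul_le_mul_of_nonneg_right _ hd0
            calc Kb * Λ * L * (q.2 : ℝ) ≤ Kb * Λ * L * T₀ :=
                  mul_le_mul_of_nonneg_left ht hKBLΛ.le
              _ ≤ 1 / 2 := key2
    apply max_le
    · show dist (N₀ (q.1 : ℝ) + Jd (G1 u) ((q.1 : ℝ), (q.2 : ℝ)))
        (N₀ (q.1 : ℝ) + Jd (G1 u') ((q.1 : ℝ), (q.2 : ℝ))) ≤ 1 / 2 * dist u u'
      rw [Real.dist_eq, add_sub_add_left_eq_sub]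
      exact key _ _ (hG1c u) (hG1c u') (hG1B u hu) (hG1B u' hu') (hG1L u hu u' hu')
    · show dist (V₀ (q.1 : ℝ) + Jd (G2 u) ((q.1 : ℝ), (q.2 : ℝ)))
        (V₀ (q.1 : ℝ) + Jd (G2 u') ((q.1 : ℝ), (q.2 : ℝ))) ≤ 1 / 2 * dist u u'
      rw [Real.dist_eq, add_sub_add_left_eq_sub]
      exact key _ _ (hG2c u) (hG2c u') (hG2B u hu) (hG2B u' hu') (hG2L u hu u' hu')
  -- the contraction
  have hΦlip : ContractingWith (1/2 : NNReal) (hmaps.restrict Φ S S) := by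
    constructor
    · rw [← NNReal.coe_lt_coe]; norm_num
    · apply LipschitzWith.of_dist_le_mul
      intro x y
      have h := hcontr (x : X) x.2 (y : X) y.2
      rw [Subtype.dist_eq, Subtype.dist_eq, MapsTo.val_restrict_apply, MapsTo.val_restrict_apply]
      calc dist (Φ (x : X)) (Φ (y : X)) ≤ 1 / 2 * dist (x : X) (y : X) := h
        _ = ((1/2 : NNReal) : ℝ) * dist (x : X) (y : X) := by norm_num
  obtain ⟨w, hwS, hwfix, -, -⟩ :=
    ContractingWith.exists_fixedPoint' hSc hmaps hΦlip hu₀S (edist_ne_top _ _)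
  have hfix : Φ w = w := hwfix
  -- evaluation of the fixed point equation
  have heval : ∀ ξ t : ℝ,
      nn w ξ t = N₀ ((pL ξ : ℝ)) + Jd (G1 w) ((pL ξ : ℝ), (pT t : ℝ)) ∧
      vv w ξ t = V₀ ((pL ξ : ℝ)) + Jd (G2 w) ((pL ξ : ℝ), (pT t : ℝ)) := by
    intro ξ t
    have hq := DFunLike.congr_fun hfix (pL ξ, pT t)
    constructor
    · calc nn w ξ t = (w (pL ξ, pT t)).1 := rfl
        _ = ((Φ w) (pL ξ, pT t)).1 := by rw [hq]
        _ = N₀ ((pL ξ : ℝ)) + Jd (G1 w) ((pL ξ : ℝ), (pT t : ℝ)) := rfl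
    · calc vv w ξ t = (w (pL ξ, pT t)).2 := rfl
        _ = ((Φ w) (pL ξ, pT t)).2 := by rw [hq]
        _ = V₀ ((pL ξ : ℝ)) + Jd (G2 w) ((pL ξ : ℝ), (pT t : ℝ)) := rfl
  -- the inner integrals vanish at the endpoints
  have key0 : ∀ g : ℝ → ℝ → ℝ, ∀ t : ℝ, Jd g ((0:ℝ), t) = 0 := by
    intro g t
    have hz : ∀ τ : ℝ, (∫ s in (0:ℝ)..L, Kt L β μ ((pL (0:ℝ) : ℝ)) s * g s τ) = 0 := by
      intro τ
      have h0v : ((pL (0:ℝ) : ℝ)) = 0 := by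
        rw [hpLdef]; simp [projIcc_of_mem hL.le (⟨le_refl _, hL.le⟩ : (0:ℝ) ∈ Icc (0:ℝ) L)]
      rw [h0v]
      have hae : ∀ᵐ s ∂(volume : Measure ℝ), s ∈ Set.uIoc (0:ℝ) L →
          Kt L β μ 0 s * g s τ = (fun _ => (0:ℝ)) s := by
        refine Eventually.of_forall fun s hs => ?_
        rw [uIoc_of_le hL.le] at hs
        rw [Kt_left hs.1, zero_mul]
      calc (∫ s in (0:ℝ)..L, Kt L β μ 0 s * g s τ)
          = ∫ s in (0:ℝ)..L, (0:ℝ) := intervalIntegral.integral_congr_ae hae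
        _ = 0 := intervalIntegral.integral_zero
    calc Jd g ((0:ℝ), t)
        = ∫ τ in (0:ℝ)..t, ∫ s in (0:ℝ)..L, Kt L β μ ((pL (0:ℝ) : ℝ)) s * g s τ := rfl
      _ = ∫ τ in (0:ℝ)..t, (0:ℝ) := by simp only [hz]
      _ = 0 := intervalIntegral.integral_zero
  have keyL : ∀ g : ℝ → ℝ → ℝ, ∀ t : ℝ, Jd g (L, t) = 0 := by
    intro g t
    have hz : ∀ τ : ℝ, (∫ s in (0:ℝ)..L, Kt L β μ ((pL L : ℝ)) s * g s τ) = 0 := by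
      intro τ
      have hLv : ((pL L : ℝ)) = L := by
        rw [hpLdef]; simp [projIcc_of_mem hL.le (⟨hL.le, le_refl _⟩ : L ∈ Icc (0:ℝ) L)]
      rw [hLv]
      have hae : ∀ᵐ s ∂(volume : Measure ℝ), s ∈ Set.uIoc (0:ℝ) L →
          Kt L β μ L s * g s τ = (fun _ => (0:ℝ)) s := by
        filter_upwards [compl_mem_ae_iff.2 (measure_singleton (L:ℝ))] with s hsne hs
        rw [uIoc_of_le hL.le] at hs
        have hsL : s < L := lt_of_le_of_ne hs.2 (by simpa using hsne)
        rw [Kt_right hs.1 hsL, zero_mul]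
      calc (∫ s in (0:ℝ)..L, Kt L β μ L s * g s τ)
          = ∫ s in (0:ℝ)..L, (0:ℝ) := intervalIntegral.integral_congr_ae hae
        _ = 0 := intervalIntegral.integral_zero
    calc Jd g (L, t)
        = ∫ τ in (0:ℝ)..t, ∫ s in (0:ℝ)..L, Kt L β μ ((pL L : ℝ)) s * g s τ := rfl
      _ = ∫ τ in (0:ℝ)..t, (0:ℝ) := by simp only [hz]
      _ = 0 := intervalIntegral.integral_zero
  -- conclusion
  refine ⟨T₀, hT₀, hT₀T, nn w, vv w, (hnnc w).continuousOn, (hvvc w).continuousOn, ?_, ?_⟩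
  · intro ξ hξ t ht
    have hξv : ((pL ξ : ℝ)) = ξ := by rw [hpLdef]; simp [projIcc_of_mem hL.le hξ]
    have htv : ((pT t : ℝ)) = t := by rw [hpTdef]; simp [projIcc_of_mem hT₀.le ht]
    obtain ⟨he1, he2⟩ := heval ξ t
    rw [hξv, htv] at he1 he2
    have hinner : ∀ g : ℝ → ℝ → ℝ, Jd g (ξ, t) =
        ∫ τ in (0:ℝ)..t, ∫ s in (0:ℝ)..L, Kt L β μ ξ s * g s τ := by
      intro g
      calc Jd g (ξ, t)
          = ∫ τ in (0:ℝ)..t, ∫ s in (0:ℝ)..L, Kt L β μ ((pL ξ : ℝ)) s * g s τ := rfl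
        _ = ∫ τ in (0:ℝ)..t, ∫ s in (0:ℝ)..L, Kt L β μ ξ s * g s τ := by rw [hξv]
    constructor
    · rw [he1, hinner (G1 w)]
      congr 1
      apply intervalIntegral.integral_congr
      intro τ _
      dsimp only
      apply intervalIntegral.integral_congr_ae
      filter_upwards [compl_mem_ae_iff.2 (measure_singleton ξ)] with s hsne hsmem
      have hsne' : s ≠ ξ := by simpa using hsne
      rw [uIoc_of_le hL.le] at hsmem
      have hsIcc : s ∈ Icc (0:ℝ) L := Ioc_subset_Icc_self hsmem
      have hcs : cc s = c s := by
        rw [hccdef]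
        simp [hpLdef, projIcc_of_mem hL.le hsIcc]
      rw [hK ξ s (Ne.symm hsne'), ← hcs]
      rfl
    · rw [he2, hinner (G2 w)]
      congr 1
      apply intervalIntegral.integral_congr
      intro τ _
      dsimp only
      apply intervalIntegral.integral_congr_ae
      filter_upwards [compl_mem_ae_iff.2 (measure_singleton ξ)] with s hsne hsmem
      have hsne' : s ≠ ξ := by simpa using hsne
      rw [uIoc_of_le hL.le] at hsmem
      have hsIcc : s ∈ Icc (0:ℝ) L := Ioc_subset_Icc_self hsmem
      have hcs : cc s = c s := by
        rw [hccdef]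
        simp [hpLdef, projIcc_of_mem hL.le hsIcc]
      rw [hK ξ s (Ne.symm hsne'), ← hcs]
      rfl
  · intro t ht
    have h0v : ((pL (0:ℝ) : ℝ)) = 0 := by
      rw [hpLdef]; simp [projIcc_of_mem hL.le (⟨le_refl _, hL.le⟩ : (0:ℝ) ∈ Icc (0:ℝ) L)]
    have hLv : ((pL L : ℝ)) = L := by
      rw [hpLdef]; simp [projIcc_of_mem hL.le (⟨hL.le, le_refl _⟩ : L ∈ Icc (0:ℝ) L)]
    refine ⟨?_, ?_, ?_, ?_⟩
    · obtain ⟨he1, -⟩ := heval 0 t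
      rw [h0v] at he1
      rw [he1, key0, hN₀0, add_zero]
    · obtain ⟨he1, -⟩ := heval L t
      rw [hLv] at he1
      rw [he1, keyL, hN₀L, add_zero]
    · obtain ⟨-, he2⟩ := heval 0 t
      rw [h0v] at he2
      rw [he2, key0, hV₀0, add_zero]
    · obtain ⟨-, he2⟩ := heval L t
      rw [hLv] at he2
      rw [he2, keyL, hV₀L, add_zero]
end

section
/- Let L, T > 0 and α, β > 0 be fixed constants, set μ = √(β/6), let K(ξ,s) = (3/β)[sinh((L − ξ − s)/μ) + sign(ξ − s) sinh((L − |ξ − s|)/μ)]/sinh(L/μ) for ξ ≠ s, and let c : [0, L] → ℝ be continuous. Let R > 0 and suppose (N, V) and (Ñ, Ṽ) are continuous solutions on [0, L] × [0, T₀] of the integral system N(ξ, t) = N₀(ξ) + ∫₀ᵗ ∫₀ᴸ K(ξ, s)(1 + α c(s)² N(s, τ)) V(s, τ) ds dτ, V(ξ, t) = V₀(ξ) + ∫₀ᵗ ∫₀ᴸ K(ξ, s)[ c(s) N(s, τ) + (α/2) c(s)² V(s, τ)² ] ds dτ, with continuous initial data (N₀, V₀) and (Ñ₀, Ṽ₀)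 respectively, and with sup norms of N, V, Ñ, Ṽ on [0, L] × [0, T₀] all bounded by R. Then there exists a constant D > 0, depending only on L, β, α, the sup norm of c, and R, such that for all t ∈ [0, T₀]: sup_{ξ ∈ [0,L]} |N(ξ, t) − Ñ(ξ, t)| + sup_{ξ ∈ [0,L]} |V(ξ, t) − Ṽ(ξ, t)| ≤ ( sup_{ξ} |N₀(ξ) − Ñ₀(ξ)| + sup_{ξ} |V₀(ξ) − Ṽ₀(ξ)| ) · exp(D t). In particular, the solution of the integral system depends continuously on the initial data. -/
open Set MeasureTheory intervalIntegral Function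

namespace BoussAux

/-- Uniform modulus of continuity in the second variable. -/
lemma modulus {L T₀ : ℝ} {G : ℝ → ℝ → ℝ}
    (hG : ContinuousOn (uncurry G) (Icc 0 L ×ˢ Icc 0 T₀)) :
    ∀ ε > (0:ℝ), ∃ δ > (0:ℝ), ∀ t ∈ Icc (0:ℝ) T₀, ∀ t' ∈ Icc (0:ℝ) T₀,
      |t - t'| < δ → ∀ s ∈ Icc (0:ℝ) L, |G s t - G s t'| ≤ ε := by
  intro ε hε
  have hcomp : IsCompact (Icc (0:ℝ) L ×ˢ Icc (0:ℝ) T₀) := isCompact_Icc.prod isCompact_Icc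
  have hu := hcomp.uniformContinuousOn_of_continuous hG
  rw [Metric.uniformContinuousOn_iff] at hu
  obtain ⟨δ, hδ, h⟩ := hu ε hε
  refine ⟨δ, hδ, fun t ht t' ht' hd s hs => ?_⟩
  have hdist : dist ((s, t) : ℝ × ℝ) (s, t') < δ := by
    rw [Prod.dist_eq]
    simpa [Real.dist_eq, max_eq_right (abs_nonneg (t - t'))] using hd
  have := h (s, t) ⟨hs, ht⟩ (s, t') ⟨hs, ht'⟩ hdist
  rw [Real.dist_eq] at this
  exact this.le

lemma slice_cont {L T₀ : ℝ} {F : ℝ → ℝ → ℝ}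
    (hF : ContinuousOn (uncurry F) (Icc 0 L ×ˢ Icc 0 T₀)) {τ : ℝ} (hτ : τ ∈ Icc (0:ℝ) T₀) :
    ContinuousOn (fun ξ => F ξ τ) (Icc (0:ℝ) L) :=
  hF.comp ((continuous_id.prodMk continuous_const).continuousOn) (fun ξ hξ => ⟨hξ, hτ⟩)

lemma slice_bdd {L T₀ : ℝ} {F : ℝ → ℝ → ℝ}
    (hF : ContinuousOn (uncurry F) (Icc 0 L ×ˢ Icc 0 T₀)) {τ : ℝ} (hτ : τ ∈ Icc (0:ℝ) T₀) :
    BddAbove ((fun ξ => F ξ τ) '' Icc (0:ℝ) L) :=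
  (isCompact_Icc.image_of_continuousOn (slice_cont hF hτ)).bddAbove

lemma le_sSup_slice {L T₀ : ℝ} {F : ℝ → ℝ → ℝ}
    (hF : ContinuousOn (uncurry F) (Icc 0 L ×ˢ Icc 0 T₀)) {τ : ℝ} (hτ : τ ∈ Icc (0:ℝ) T₀)
    {s : ℝ} (hs : s ∈ Icc (0:ℝ) L) :
    F s τ ≤ sSup ((fun ξ => F ξ τ) '' Icc (0:ℝ) L) :=
  le_csSup (slice_bdd hF hτ) (mem_image_of_mem _ hs)

/-- Continuity of the running supremum. -/
lemma supCont {L T₀ : ℝ} (hL : 0 ≤ L) {F : ℝ → ℝ → ℝ}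
    (hF : ContinuousOn (uncurry F) (Icc 0 L ×ˢ Icc 0 T₀)) :
    ContinuousOn (fun t => sSup ((fun ξ => F ξ t) '' Icc (0:ℝ) L)) (Icc (0:ℝ) T₀) := by
  have hne : (Icc (0:ℝ) L).Nonempty := nonempty_Icc.2 hL
  rw [Metric.continuousOn_iff]
  intro t ht ε hε
  obtain ⟨δ, hδ, h⟩ := modulus hF (ε/2) (by linarith)
  refine ⟨δ, hδ, fun t' ht' hd => ?_⟩
  have key : ∀ u ∈ Icc (0:ℝ) T₀, ∀ u' ∈ Icc (0:ℝ) T₀, |u - u'| < δ →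
      sSup ((fun ξ => F ξ u) '' Icc (0:ℝ) L) ≤
        sSup ((fun ξ => F ξ u') '' Icc (0:ℝ) L) + ε/2 := by
    intro u hu u' hu' hduu
    apply csSup_le (hne.image _)
    rintro x ⟨ξ, hξ, rfl⟩
    have h1 : F ξ u - F ξ u' ≤ ε/2 := (le_abs_self _).trans (h u hu u' hu' hduu ξ hξ)
    have h2 : F ξ u' ≤ sSup ((fun ξ => F ξ u') '' Icc (0:ℝ) L) := le_sSup_slice hF hu' hξ
    linarith
  rw [Real.dist_eq] at hd ⊢
  have h1 := key t' ht' t ht hd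
  have h2 := key t ht t' ht' (by rw [abs_sub_comm]; exact hd)
  rw [abs_sub_lt_iff]
  constructor <;> linarith

/-- Integrability and bound for the inner integral against a bounded kernel. -/
lemma inner {L M Cg : ℝ} (hL : 0 ≤ L) (hM : 0 ≤ M) {KK g : ℝ → ℝ} (ξ : ℝ)
    (hKm : AEStronglyMeasurable KK (volume.restrict (Ioc 0 L)))
    (hKb : ∀ s ∈ Icc (0:ℝ) L, s ≠ ξ → |KK s| ≤ M)
    (hg : ContinuousOn g (Icc (0:ℝ) L))
    (hCg : ∀ s ∈ Icc (0:ℝ) L, |g s| ≤ Cg) :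
    IntervalIntegrable (fun s => KK s * g s) volume 0 L ∧
      |∫ s in (0:ℝ)..L, KK s * g s| ≤ M * Cg * L := by
  have hCg0 : 0 ≤ Cg := (abs_nonneg _).trans (hCg 0 ⟨le_rfl, hL⟩)
  have hne : ∀ᵐ s : ℝ, s ≠ ξ := by
    rw [ae_iff]
    simpa using measure_singleton (α := ℝ) ξ
  have hbnd : ∀ s ∈ Icc (0:ℝ) L, s ≠ ξ → ‖KK s * g s‖ ≤ M * Cg := by
    intro s hs hsne
    rw [Real.norm_eq_abs, abs_mul]
    exact mul_le_mul (hKb s hs hsne) (hCg s hs) (abs_nonneg _) hM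
  have hae : ∀ᵐ s ∂(volume.restrict (Ioc (0:ℝ) L)), ‖KK s * g s‖ ≤ M * Cg := by
    filter_upwards [ae_restrict_mem measurableSet_Ioc, ae_restrict_of_ae hne] with s hs hsne
    exact hbnd s (Ioc_subset_Icc_self hs) hsne
  have hgm : AEStronglyMeasurable g (volume.restrict (Ioc (0:ℝ) L)) :=
    (hg.mono Ioc_subset_Icc_self).aestronglyMeasurable measurableSet_Ioc
  have hint : IntegrableOn (fun s => KK s * g s) (Ioc (0:ℝ) L) volume :=
    Integrable.mono' (integrable_const (M * Cg)) (hKm.mul hgm) hae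
  have hii : IntervalIntegrable (fun s => KK s * g s) volume 0 L := by
    rw [intervalIntegrable_iff, uIoc_of_le hL]
    exact hint
  refine ⟨hii, ?_⟩
  have hbd := intervalIntegral.norm_integral_le_of_norm_le_const_ae
      (C := M * Cg) (f := fun s => KK s * g s) (a := 0) (b := L) ?_
  · rw [Real.norm_eq_abs] at hbd
    calc |∫ s in (0:ℝ)..L, KK s * g s| ≤ M * Cg * |L - 0| := hbd
      _ = M * Cg * L := by rw [sub_zero, abs_of_nonneg hL]
  · filter_upwards [hne] with s hsne hsI
    rw [uIoc_of_le hL] at hsI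
    exact hbnd s (Ioc_subset_Icc_self hsI) hsne

end BoussAux

open Set MeasureTheory intervalIntegral Function

namespace BoussAux2

lemma sign_measurable : Measurable Real.sign := by
  have : Real.sign = fun r : ℝ => if r < 0 then (-1:ℝ) else if 0 < r then 1 else 0 :=
    funext fun r => rfl
  rw [this]
  exact Measurable.ite (measurableSet_lt measurable_id measurable_const) measurable_const
    (Measurable.ite (measurableSet_lt measurable_const measurable_id) measurable_const
      measurable_const)

/-- Continuity in `τ` of the inner integral. -/
lemma contInner {L T₀ M : ℝ} (hL : 0 ≤ L) (hM : 0 ≤ M) {KK : ℝ → ℝ} {ξ : ℝ}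
    (hKm : AEStronglyMeasurable KK (volume.restrict (Ioc 0 L)))
    (hKb : ∀ s ∈ Icc (0:ℝ) L, s ≠ ξ → |KK s| ≤ M)
    {g : ℝ → ℝ → ℝ} (hg : ContinuousOn (uncurry g) (Icc 0 L ×ˢ Icc 0 T₀)) :
    ContinuousOn (fun τ => ∫ s in (0:ℝ)..L, KK s * g s τ) (Icc (0:ℝ) T₀) := by
  have hcomp : IsCompact (Icc (0:ℝ) L ×ˢ Icc (0:ℝ) T₀) := isCompact_Icc.prod isCompact_Icc
  obtain ⟨Cg, hCgb⟩ := hcomp.exists_bound_of_continuousOn hg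
  have hii : ∀ τ ∈ Icc (0:ℝ) T₀, IntervalIntegrable (fun s => KK s * g s τ) volume 0 L := by
    intro τ hτ
    exact (BoussAux.inner hL hM ξ hKm hKb (BoussAux.slice_cont hg hτ)
      (fun s hs => by simpa [Real.norm_eq_abs] using hCgb (s, τ) ⟨hs, hτ⟩)).1
  rw [Metric.continuousOn_iff]
  intro τ hτ ε hε
  have hML : (0:ℝ) < M * L + 1 := by positivity
  obtain ⟨δ, hδ, h⟩ := BoussAux.modulus hg (ε / (2 * (M * L + 1))) (by positivity)
  refine ⟨δ, hδ, fun τ' hτ' hd => ?_⟩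
  rw [Real.dist_eq] at hd ⊢
  have hdiff : (∫ s in (0:ℝ)..L, KK s * g s τ') - ∫ s in (0:ℝ)..L, KK s * g s τ
      = ∫ s in (0:ℝ)..L, KK s * (g s τ' - g s τ) := by
    rw [← intervalIntegral.integral_sub (hii τ' hτ') (hii τ hτ)]
    simp_rw [← mul_sub]
  have hslice : ContinuousOn (fun s => g s τ' - g s τ) (Icc (0:ℝ) L) :=
    (BoussAux.slice_cont hg hτ').sub (BoussAux.slice_cont hg hτ)
  have hbound := (BoussAux.inner hL hM ξ hKm hKb hslice
    (fun s hs => h τ' hτ' τ hτ hd s hs)).2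
  rw [hdiff]
  calc |∫ s in (0:ℝ)..L, KK s * (g s τ' - g s τ)| ≤ M * (ε / (2 * (M * L + 1))) * L := hbound
    _ < ε := by
        rw [show M * (ε / (2 * (M * L + 1))) * L = (M * L) * ε / (2 * (M * L + 1)) by ring,
          div_lt_iff₀ (by positivity)]
        nlinarith [mul_nonneg hM hL]

lemma est1 {α cs n v n' v' Cc R X Y : ℝ} (hα : 0 < α) (hc : |cs| ≤ Cc) (hn : |n| ≤ R)
    (hv' : |v'| ≤ R) (hX : |n - n'| ≤ X) (hY : |v - v'| ≤ Y) :
    |(1 + α * cs ^ 2 * n) * v - (1 + α * cs ^ 2 * n') * v'|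
      ≤ (1 + α * Cc ^ 2 * R) * (X + Y) := by
  have hR : 0 ≤ R := (abs_nonneg _).trans hn
  have hX0 : 0 ≤ X := (abs_nonneg _).trans hX
  have hY0 : 0 ≤ Y := (abs_nonneg _).trans hY
  have hcs2 : cs ^ 2 ≤ Cc ^ 2 := by nlinarith [abs_nonneg cs, sq_abs cs]
  have key : (1 + α * cs ^ 2 * n) * v - (1 + α * cs ^ 2 * n') * v'
      = (v - v') + α * cs ^ 2 * (n * (v - v') + v' * (n - n')) := by ring
  rw [key]
  have h2 : |n * (v - v') + v' * (n - n')| ≤ R * Y + R * X := by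
    refine (abs_add_le _ _).trans ?_
    rw [abs_mul, abs_mul]
    exact add_le_add (mul_le_mul hn hY (abs_nonneg _) hR) (mul_le_mul hv' hX (abs_nonneg _) hR)
  have t1 : |α * cs ^ 2 * (n * (v - v') + v' * (n - n'))| ≤ α * Cc ^ 2 * (R * Y + R * X) := by
    rw [abs_mul, abs_of_nonneg (show (0:ℝ) ≤ α * cs ^ 2 by positivity)]
    exact mul_le_mul (by nlinarith) h2 (abs_nonneg _) (by positivity)
  refine (abs_add_le _ _).trans ?_
  nlinarith [t1, hY, hX0, mul_nonneg (mul_nonneg hα.le (sq_nonneg Cc)) hR]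

lemma est2 {α cs n v n' v' Cc R X Y : ℝ} (hα : 0 < α) (hc : |cs| ≤ Cc) (hv : |v| ≤ R)
    (hv' : |v'| ≤ R) (hX : |n - n'| ≤ X) (hY : |v - v'| ≤ Y) :
    |(cs * n + α / 2 * cs ^ 2 * v ^ 2) - (cs * n' + α / 2 * cs ^ 2 * v' ^ 2)|
      ≤ (Cc + α * Cc ^ 2 * R) * (X + Y) := by
  have hR : 0 ≤ R := (abs_nonneg _).trans hv
  have hX0 : 0 ≤ X := (abs_nonneg _).trans hX
  have hY0 : 0 ≤ Y := (abs_nonneg _).trans hY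
  have hCc0 : 0 ≤ Cc := (abs_nonneg _).trans hc
  have hcs2 : cs ^ 2 ≤ Cc ^ 2 := by nlinarith [abs_nonneg cs, sq_abs cs]
  have key : (cs * n + α / 2 * cs ^ 2 * v ^ 2) - (cs * n' + α / 2 * cs ^ 2 * v' ^ 2)
      = cs * (n - n') + α / 2 * cs ^ 2 * ((v + v') * (v - v')) := by ring
  rw [key]
  have t0 : |cs * (n - n')| ≤ Cc * X := by
    rw [abs_mul]; exact mul_le_mul hc hX (abs_nonneg _) hCc0
  have h2 : |(v + v') * (v - v')| ≤ (2 * R) * Y := by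
    rw [abs_mul]
    exact mul_le_mul ((abs_add_le _ _).trans (by linarith)) hY (abs_nonneg _) (by linarith)
  have t1 : |α / 2 * cs ^ 2 * ((v + v') * (v - v'))| ≤ α / 2 * Cc ^ 2 * ((2 * R) * Y) := by
    rw [abs_mul, abs_of_nonneg (show (0:ℝ) ≤ α / 2 * cs ^ 2 by positivity)]
    exact mul_le_mul (by nlinarith) h2 (abs_nonneg _) (by positivity)
  refine (abs_add_le _ _).trans ?_
  nlinarith [t0, t1, mul_nonneg (mul_nonneg hα.le (sq_nonneg Cc)) (mul_nonneg hR hY0),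
    mul_nonneg hCc0 hY0, mul_nonneg (mul_nonneg hα.le (sq_nonneg Cc)) (mul_nonneg hR hX0)]

end BoussAux2

/-- Continuous dependence on the initial data for the Green's-function integral
reformulation of the variable-coefficient Boussinesq system: a Grönwall-type
estimate. The constant `D` depends only on `L, β, α`, the coefficient `c`, and the
a-priori bound `R` on the solutions. -/
theorem boussinesq_integral_system_continuous_dependence
    (L T α β : ℝ) (hL : 0 < L) (hT : 0 < T) (hα : 0 < α) (hβ : 0 < β)
    (μ : ℝ) (hμ : μ = Real.sqrt (β / 6))
    (K : ℝ → ℝ → ℝ)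
    (hK : ∀ ξ s : ℝ, ξ ≠ s → K ξ s =
      (3 / β) * ((Real.sinh ((L - ξ - s) / μ) +
        Real.sign (ξ - s) * Real.sinh ((L - |ξ - s|) / μ)) / Real.sinh (L / μ)))
    (c : ℝ → ℝ) (hc : ContinuousOn c (Set.Icc (0 : ℝ) L)) :
    ∀ R > (0 : ℝ), ∃ D > (0 : ℝ),
      ∀ T₀ : ℝ, 0 < T₀ → T₀ ≤ T →
      ∀ N₀ V₀ N₀' V₀' : ℝ → ℝ,
        ContinuousOn N₀ (Set.Icc (0 : ℝ) L) →
        ContinuousOn V₀ (Set.Icc (0 : ℝ) L) →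
        ContinuousOn N₀' (Set.Icc (0 : ℝ) L) →
        ContinuousOn V₀' (Set.Icc (0 : ℝ) L) →
      ∀ N V N' V' : ℝ → ℝ → ℝ,
        ContinuousOn (Function.uncurry N) (Set.Icc (0 : ℝ) L ×ˢ Set.Icc (0 : ℝ) T₀) →
        ContinuousOn (Function.uncurry V) (Set.Icc (0 : ℝ) L ×ˢ Set.Icc (0 : ℝ) T₀) →
        ContinuousOn (Function.uncurry N') (Set.Icc (0 : ℝ) L ×ˢ Set.Icc (0 : ℝ) T₀) →
        ContinuousOn (Function.uncurry V') (Set.Icc (0 : ℝ) L ×ˢ Set.Icc (0 : ℝ) T₀) →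
        (∀ ξ ∈ Set.Icc (0 : ℝ) L, ∀ t ∈ Set.Icc (0 : ℝ) T₀,
          N ξ t = N₀ ξ + ∫ τ in (0 : ℝ)..t, ∫ s in (0 : ℝ)..L,
              K ξ s * ((1 + α * c s ^ 2 * N s τ) * V s τ) ∧
          V ξ t = V₀ ξ + ∫ τ in (0 : ℝ)..t, ∫ s in (0 : ℝ)..L,
              K ξ s * (c s * N s τ + α / 2 * c s ^ 2 * V s τ ^ 2)) →
        (∀ ξ ∈ Set.Icc (0 : ℝ) L, ∀ t ∈ Set.Icc (0 : ℝ) T₀,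
          N' ξ t = N₀' ξ + ∫ τ in (0 : ℝ)..t, ∫ s in (0 : ℝ)..L,
              K ξ s * ((1 + α * c s ^ 2 * N' s τ) * V' s τ) ∧
          V' ξ t = V₀' ξ + ∫ τ in (0 : ℝ)..t, ∫ s in (0 : ℝ)..L,
              K ξ s * (c s * N' s τ + α / 2 * c s ^ 2 * V' s τ ^ 2)) →
        (∀ ξ ∈ Set.Icc (0 : ℝ) L, ∀ t ∈ Set.Icc (0 : ℝ) T₀,
          |N ξ t| ≤ R ∧ |V ξ t| ≤ R ∧ |N' ξ t| ≤ R ∧ |V' ξ t| ≤ R) →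
        ∀ t ∈ Set.Icc (0 : ℝ) T₀,
          sSup ((fun ξ => |N ξ t - N' ξ t|) '' Set.Icc (0 : ℝ) L) +
            sSup ((fun ξ => |V ξ t - V' ξ t|) '' Set.Icc (0 : ℝ) L) ≤
          (sSup ((fun ξ => |N₀ ξ - N₀' ξ|) '' Set.Icc (0 : ℝ) L) +
            sSup ((fun ξ => |V₀ ξ - V₀' ξ|) '' Set.Icc (0 : ℝ) L)) * Real.exp (D * t) := by
  intro R hR
  have hμ0 : 0 < μ := by rw [hμ]; exact Real.sqrt_pos.2 (by positivity)
  have hsinh : 0 < Real.sinh (L / μ) := Real.sinh_pos_iff.2 (by positivity)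
  -- kernel bound
  have hKb : ∀ ξ ∈ Set.Icc (0:ℝ) L, ∀ s ∈ Set.Icc (0:ℝ) L, s ≠ ξ → |K ξ s| ≤ 6 / β := by
    intro ξ hξ s hs hne
    rw [hK ξ s hne.symm]
    have habs : ∀ x : ℝ, |x| ≤ L → |Real.sinh (x / μ)| ≤ Real.sinh (L / μ) := by
      intro x hx
      rw [Real.abs_sinh, Real.sinh_le_sinh, abs_div, abs_of_pos hμ0]
      exact div_le_div_of_nonneg_right hx hμ0.le
    have hA : |Real.sinh ((L - ξ - s) / μ)| ≤ Real.sinh (L / μ) :=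
      habs _ (abs_le.2 ⟨by linarith [hξ.1, hξ.2, hs.1, hs.2],
        by linarith [hξ.1, hξ.2, hs.1, hs.2]⟩)
    have habs2 : |ξ - s| ≤ L := abs_le.2 ⟨by linarith [hξ.1, hξ.2, hs.1, hs.2],
        by linarith [hξ.1, hξ.2, hs.1, hs.2]⟩
    have hB : |Real.sinh ((L - |ξ - s|) / μ)| ≤ Real.sinh (L / μ) :=
      habs _ (abs_le.2 ⟨by linarith [abs_nonneg (ξ - s)], by linarith [abs_nonneg (ξ - s)]⟩)
    have hsg : |Real.sign (ξ - s)| ≤ 1 := by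
      rcases Real.sign_apply_eq (ξ - s) with h | h | h <;> rw [h] <;> norm_num
    have hnum : |Real.sinh ((L - ξ - s) / μ) +
        Real.sign (ξ - s) * Real.sinh ((L - |ξ - s|) / μ)| ≤ 2 * Real.sinh (L / μ) := by
      refine (abs_add_le _ _).trans ?_
      rw [abs_mul]
      have := mul_le_mul hsg hB (abs_nonneg _) zero_le_one
      linarith
    rw [abs_mul, abs_of_pos (show (0:ℝ) < 3 / β by positivity), abs_div, abs_of_pos hsinh]
    have h2 : |Real.sinh ((L - ξ - s) / μ) +
        Real.sign (ξ - s) * Real.sinh ((L - |ξ - s|) / μ)| / Real.sinh (L / μ) ≤ 2 := by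
      rw [div_le_iff₀ hsinh]; linarith
    calc 3 / β * (|Real.sinh ((L - ξ - s) / μ) +
          Real.sign (ξ - s) * Real.sinh ((L - |ξ - s|) / μ)| / Real.sinh (L / μ))
        ≤ 3 / β * 2 := mul_le_mul_of_nonneg_left h2 (by positivity)
      _ = 6 / β := by ring
  -- kernel measurability
  have hKm : ∀ ξ : ℝ, MeasureTheory.AEStronglyMeasurable (K ξ)
      (MeasureTheory.volume.restrict (Set.Ioc 0 L)) := by
    intro ξ
    have hform : Measurable (fun s : ℝ => (3 / β) * ((Real.sinh ((L - ξ - s) / μ) +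
        Real.sign (ξ - s) * Real.sinh ((L - |ξ - s|) / μ)) / Real.sinh (L / μ))) := by
      have m1 : Measurable fun s : ℝ => Real.sinh ((L - ξ - s) / μ) :=
        (Real.continuous_sinh.comp (by continuity)).measurable
      have m2 : Measurable fun s : ℝ => Real.sign (ξ - s) :=
        BoussAux2.sign_measurable.comp ((continuous_const.sub continuous_id).measurable)
      have m3 : Measurable fun s : ℝ => Real.sinh ((L - |ξ - s|) / μ) :=
        (Real.continuous_sinh.comp (by continuity)).measurable
      exact (((m1.add (m2.mul m3)).div_const _).const_mul _)
    have hne : ∀ᵐ s : ℝ, s ≠ ξ := by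
      rw [MeasureTheory.ae_iff]
      simpa using MeasureTheory.measure_singleton (α := ℝ) ξ
    apply hform.aestronglyMeasurable.congr
    filter_upwards [MeasureTheory.ae_restrict_of_ae hne] with s hsne
    exact (hK ξ s hsne.symm).symm
  -- bound on c
  obtain ⟨Cc, hCcb'⟩ := isCompact_Icc.exists_bound_of_continuousOn hc
  have hCcb : ∀ s ∈ Set.Icc (0:ℝ) L, |c s| ≤ Cc := fun s hs => by
    simpa [Real.norm_eq_abs] using hCcb' s hs
  have hCc0 : 0 ≤ Cc := (abs_nonneg _).trans (hCcb 0 ⟨le_rfl, hL.le⟩)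
  have hM0 : (0:ℝ) ≤ 6 / β := by positivity
  have hPnn : 0 ≤ α * Cc ^ 2 * R := by positivity
  refine ⟨6 / β * L * ((1 + α * Cc ^ 2 * R) + (Cc + α * Cc ^ 2 * R)), by positivity, ?_⟩
  set D : ℝ := 6 / β * L * ((1 + α * Cc ^ 2 * R) + (Cc + α * Cc ^ 2 * R)) with hD_def
  have hD : 0 < D := by positivity
  intro T₀ hT₀ hT₀T N₀ V₀ N₀' V₀' hN₀c hV₀c hN₀'c hV₀'c N V N' V' hNc hVc hN'c hV'c heqa heqb
    hRb t ht
  have hT₀0 : (0:ℝ) ≤ T₀ := hT₀.le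
  set aN : ℝ := sSup ((fun ξ => |N₀ ξ - N₀' ξ|) '' Set.Icc (0:ℝ) L) with haN_def
  set aV : ℝ := sSup ((fun ξ => |V₀ ξ - V₀' ξ|) '' Set.Icc (0:ℝ) L) with haV_def
  have haNb : ∀ ξ ∈ Set.Icc (0:ℝ) L, |N₀ ξ - N₀' ξ| ≤ aN := fun ξ hξ =>
    le_csSup (isCompact_Icc.image_of_continuousOn ((hN₀c.sub hN₀'c).abs)).bddAbove
      (Set.mem_image_of_mem _ hξ)
  have haVb : ∀ ξ ∈ Set.Icc (0:ℝ) L, |V₀ ξ - V₀' ξ| ≤ aV := fun ξ hξ =>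
    le_csSup (isCompact_Icc.image_of_continuousOn ((hV₀c.sub hV₀'c).abs)).bddAbove
      (Set.mem_image_of_mem _ hξ)
  -- sup functions
  set SN : ℝ → ℝ := fun τ => sSup ((fun ξ => |N ξ τ - N' ξ τ|) '' Set.Icc (0:ℝ) L) with hSN_def
  set SV : ℝ → ℝ := fun τ => sSup ((fun ξ => |V ξ τ - V' ξ τ|) '' Set.Icc (0:ℝ) L) with hSV_def
  have hFΔN : ContinuousOn (Function.uncurry fun ξ τ => |N ξ τ - N' ξ τ|)
      (Set.Icc (0:ℝ) L ×ˢ Set.Icc (0:ℝ) T₀) := (hNc.sub hN'c).abs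
  have hFΔV : ContinuousOn (Function.uncurry fun ξ τ => |V ξ τ - V' ξ τ|)
      (Set.Icc (0:ℝ) L ×ˢ Set.Icc (0:ℝ) T₀) := (hVc.sub hV'c).abs
  have hSNb : ∀ τ ∈ Set.Icc (0:ℝ) T₀, ∀ s ∈ Set.Icc (0:ℝ) L, |N s τ - N' s τ| ≤ SN τ :=
    fun τ hτ s hs => BoussAux.le_sSup_slice hFΔN hτ hs
  have hSVb : ∀ τ ∈ Set.Icc (0:ℝ) T₀, ∀ s ∈ Set.Icc (0:ℝ) L, |V s τ - V' s τ| ≤ SV τ :=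
    fun τ hτ s hs => BoussAux.le_sSup_slice hFΔV hτ hs
  have hSNc : ContinuousOn SN (Set.Icc (0:ℝ) T₀) := BoussAux.supCont hL.le hFΔN
  have hSVc : ContinuousOn SV (Set.Icc (0:ℝ) T₀) := BoussAux.supCont hL.le hFΔV
  have hφ0 : ∀ τ ∈ Set.Icc (0:ℝ) T₀, 0 ≤ SN τ + SV τ := by
    intro τ hτ
    have h1 := (abs_nonneg _).trans (hSNb τ hτ 0 ⟨le_rfl, hL.le⟩)
    have h2 := (abs_nonneg _).trans (hSVb τ hτ 0 ⟨le_rfl, hL.le⟩)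
    linarith only [h1, h2]
  -- continuity of the integrands
  have hcfst : ContinuousOn (fun p : ℝ × ℝ => c p.1) (Set.Icc (0:ℝ) L ×ˢ Set.Icc (0:ℝ) T₀) :=
    hc.comp continuous_fst.continuousOn (fun p hp => hp.1)
  have hgNc : ContinuousOn (Function.uncurry fun s τ => (1 + α * c s ^ 2 * N s τ) * V s τ)
      (Set.Icc (0:ℝ) L ×ˢ Set.Icc (0:ℝ) T₀) :=
    (continuousOn_const.add ((continuousOn_const.mul (hcfst.pow 2)).mul hNc)).mul hVc
  have hgN'c : ContinuousOn (Function.uncurry fun s τ => (1 + α * c s ^ 2 * N' s τ) * V' s τ)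
      (Set.Icc (0:ℝ) L ×ˢ Set.Icc (0:ℝ) T₀) :=
    (continuousOn_const.add ((continuousOn_const.mul (hcfst.pow 2)).mul hN'c)).mul hV'c
  have hgVc : ContinuousOn (Function.uncurry fun s τ => c s * N s τ + α / 2 * c s ^ 2 * V s τ ^ 2)
      (Set.Icc (0:ℝ) L ×ˢ Set.Icc (0:ℝ) T₀) :=
    (hcfst.mul hNc).add ((continuousOn_const.mul (hcfst.pow 2)).mul (hVc.pow 2))
  have hgV'c : ContinuousOn
      (Function.uncurry fun s τ => c s * N' s τ + α / 2 * c s ^ 2 * V' s τ ^ 2)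
      (Set.Icc (0:ℝ) L ×ˢ Set.Icc (0:ℝ) T₀) :=
    (hcfst.mul hN'c).add ((continuousOn_const.mul (hcfst.pow 2)).mul (hV'c.pow 2))
  -- global bounds for the integrands
  have hprodc : IsCompact (Set.Icc (0:ℝ) L ×ˢ Set.Icc (0:ℝ) T₀) := isCompact_Icc.prod isCompact_Icc
  obtain ⟨C1, hC1⟩ := hprodc.exists_bound_of_continuousOn hgNc
  obtain ⟨C2, hC2⟩ := hprodc.exists_bound_of_continuousOn hgN'c
  obtain ⟨C3, hC3⟩ := hprodc.exists_bound_of_continuousOn hgVc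
  obtain ⟨C4, hC4⟩ := hprodc.exists_bound_of_continuousOn hgV'c
  -- the main Grönwall-type integral inequality
  have main : ∀ u ∈ Set.Icc (0:ℝ) T₀,
      SN u + SV u ≤ (aN + aV) + D * ∫ τ in (0:ℝ)..u, (SN τ + SV τ) := by
    intro u hu
    have hu0 : (0:ℝ) ≤ u := hu.1
    have hsubIcc : Set.uIcc (0:ℝ) u ⊆ Set.Icc (0:ℝ) T₀ := by
      rw [Set.uIcc_of_le hu0]; exact Set.Icc_subset_Icc le_rfl hu.2
    have hφint : IntervalIntegrable (fun τ => SN τ + SV τ) MeasureTheory.volume 0 u :=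
      ((hSNc.add hSVc).mono hsubIcc).intervalIntegrable
    have hintnn : 0 ≤ ∫ τ in (0:ℝ)..u, (SN τ + SV τ) :=
      intervalIntegral.integral_nonneg hu0 (fun τ hτ => hφ0 τ (hsubIcc (by
        rwa [Set.uIcc_of_le hu0])))
    -- generic estimate for one equation
    have hest : ∀ g g' : ℝ → ℝ → ℝ, ∀ B : ℝ, 0 ≤ B →
        ContinuousOn (Function.uncurry g) (Set.Icc (0:ℝ) L ×ˢ Set.Icc (0:ℝ) T₀) →
        ContinuousOn (Function.uncurry g') (Set.Icc (0:ℝ) L ×ˢ Set.Icc (0:ℝ) T₀) →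
        (∀ τ ∈ Set.Icc (0:ℝ) T₀, ∀ s ∈ Set.Icc (0:ℝ) L,
          |g s τ - g' s τ| ≤ B * (SN τ + SV τ)) →
        ∀ ξ ∈ Set.Icc (0:ℝ) L,
        |(∫ τ in (0:ℝ)..u, ∫ s in (0:ℝ)..L, K ξ s * g s τ) -
          ∫ τ in (0:ℝ)..u, ∫ s in (0:ℝ)..L, K ξ s * g' s τ| ≤
          6 / β * B * L * ∫ τ in (0:ℝ)..u, (SN τ + SV τ) := by
      intro g g' B hB hgc hg'c hgd ξ hξ
      have hKbξ : ∀ s ∈ Set.Icc (0:ℝ) L, s ≠ ξ → |K ξ s| ≤ 6 / β := fun s hs => hKb ξ hξ s hs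
      obtain ⟨Cg, hCg⟩ := hprodc.exists_bound_of_continuousOn hgc
      obtain ⟨Cg', hCg'⟩ := hprodc.exists_bound_of_continuousOn hg'c
      have hii : ∀ τ ∈ Set.Icc (0:ℝ) T₀,
          IntervalIntegrable (fun s => K ξ s * g s τ) MeasureTheory.volume 0 L := fun τ hτ =>
        (BoussAux.inner hL.le hM0 ξ (hKm ξ) hKbξ (BoussAux.slice_cont hgc hτ)
          (fun s hs => by simpa [Real.norm_eq_abs] using hCg (s, τ) ⟨hs, hτ⟩)).1
      have hii' : ∀ τ ∈ Set.Icc (0:ℝ) T₀,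
          IntervalIntegrable (fun s => K ξ s * g' s τ) MeasureTheory.volume 0 L := fun τ hτ =>
        (BoussAux.inner hL.le hM0 ξ (hKm ξ) hKbξ (BoussAux.slice_cont hg'c hτ)
          (fun s hs => by simpa [Real.norm_eq_abs] using hCg' (s, τ) ⟨hs, hτ⟩)).1
      have hIc : ContinuousOn (fun τ => ∫ s in (0:ℝ)..L, K ξ s * g s τ) (Set.Icc (0:ℝ) T₀) :=
        BoussAux2.contInner hL.le hM0 (hKm ξ) hKbξ hgc
      have hIc' : ContinuousOn (fun τ => ∫ s in (0:ℝ)..L, K ξ s * g' s τ) (Set.Icc (0:ℝ) T₀) :=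
        BoussAux2.contInner hL.le hM0 (hKm ξ) hKbξ hg'c
      have hIint : IntervalIntegrable (fun τ => ∫ s in (0:ℝ)..L, K ξ s * g s τ)
          MeasureTheory.volume 0 u := (hIc.mono hsubIcc).intervalIntegrable
      have hIint' : IntervalIntegrable (fun τ => ∫ s in (0:ℝ)..L, K ξ s * g' s τ)
          MeasureTheory.volume 0 u := (hIc'.mono hsubIcc).intervalIntegrable
      rw [← intervalIntegral.integral_sub hIint hIint']
      have hdom : IntervalIntegrable (fun τ => 6 / β * B * L * (SN τ + SV τ))
          MeasureTheory.volume 0 u := hφint.const_mul _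
      have hb := intervalIntegral.norm_integral_le_abs_of_norm_le (μ := MeasureTheory.volume)
          (f := fun τ => (∫ s in (0:ℝ)..L, K ξ s * g s τ) - ∫ s in (0:ℝ)..L, K ξ s * g' s τ)
          (g := fun τ => 6 / β * B * L * (SN τ + SV τ)) ?_ hdom
      · rw [Real.norm_eq_abs] at hb
        refine hb.trans ?_
        rw [intervalIntegral.integral_const_mul]
        exact le_of_eq (abs_of_nonneg (by positivity))
      · filter_upwards [MeasureTheory.ae_restrict_mem measurableSet_uIoc] with τ hτ
        rw [Set.uIoc_of_le hu0] at hτ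
        have hτT : τ ∈ Set.Icc (0:ℝ) T₀ := ⟨hτ.1.le, hτ.2.trans hu.2⟩
        have heqint : (∫ s in (0:ℝ)..L, K ξ s * g s τ) - ∫ s in (0:ℝ)..L, K ξ s * g' s τ
            = ∫ s in (0:ℝ)..L, K ξ s * (g s τ - g' s τ) := by
          rw [← intervalIntegral.integral_sub (hii τ hτT) (hii' τ hτT)]
          simp only [mul_sub]
        rw [Real.norm_eq_abs, heqint]
        have hb2 := (BoussAux.inner hL.le hM0 ξ (hKm ξ) hKbξ
          ((BoussAux.slice_cont hgc hτT).sub (BoussAux.slice_cont hg'c hτT))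
          (fun s hs => hgd τ hτT s hs)).2
        calc |∫ s in (0:ℝ)..L, K ξ s * (g s τ - g' s τ)|
            ≤ 6 / β * (B * (SN τ + SV τ)) * L := hb2
          _ = 6 / β * B * L * (SN τ + SV τ) := by ring
    -- estimate for the N-equation
    have hSNle : SN u ≤ aN + 6 / β * (1 + α * Cc ^ 2 * R) * L *
        ∫ τ in (0:ℝ)..u, (SN τ + SV τ) := by
      rw [hSN_def]
      apply csSup_le (((Set.nonempty_Icc).2 hL.le).image _)
      rintro x ⟨ξ, hξ, rfl⟩
      have hgd : ∀ τ ∈ Set.Icc (0:ℝ) T₀, ∀ s ∈ Set.Icc (0:ℝ) L,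
          |(1 + α * c s ^ 2 * N s τ) * V s τ - (1 + α * c s ^ 2 * N' s τ) * V' s τ|
            ≤ (1 + α * Cc ^ 2 * R) * (SN τ + SV τ) := by
        intro τ hτ s hs
        obtain ⟨h1, h2, h3, h4⟩ := hRb s hs τ hτ
        exact BoussAux2.est1 hα (hCcb s hs) h1 h4 (hSNb τ hτ s hs) (hSVb τ hτ s hs)
      have hkey := hest _ _ (1 + α * Cc ^ 2 * R) (by positivity) hgNc hgN'c hgd ξ hξ
      have heN := (heqa ξ hξ u hu).1
      have heN' := (heqb ξ hξ u hu).1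
      have hdec : N ξ u - N' ξ u = (N₀ ξ - N₀' ξ) +
          ((∫ τ in (0:ℝ)..u, ∫ s in (0:ℝ)..L, K ξ s * ((1 + α * c s ^ 2 * N s τ) * V s τ)) -
           ∫ τ in (0:ℝ)..u, ∫ s in (0:ℝ)..L, K ξ s * ((1 + α * c s ^ 2 * N' s τ) * V' s τ)) := by
        rw [heN, heN']; ring
      calc |N ξ u - N' ξ u| ≤ |N₀ ξ - N₀' ξ| +
          |(∫ τ in (0:ℝ)..u, ∫ s in (0:ℝ)..L, K ξ s * ((1 + α * c s ^ 2 * N s τ) * V s τ)) -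
           ∫ τ in (0:ℝ)..u, ∫ s in (0:ℝ)..L, K ξ s * ((1 + α * c s ^ 2 * N' s τ) * V' s τ)| := by
            rw [hdec]; exact abs_add_le _ _
        _ ≤ aN + 6 / β * (1 + α * Cc ^ 2 * R) * L * ∫ τ in (0:ℝ)..u, (SN τ + SV τ) :=
            add_le_add (haNb ξ hξ) hkey
    -- estimate for the V-equation
    have hSVle : SV u ≤ aV + 6 / β * (Cc + α * Cc ^ 2 * R) * L *
        ∫ τ in (0:ℝ)..u, (SN τ + SV τ) := by
      rw [hSV_def]
      apply csSup_le (((Set.nonempty_Icc).2 hL.le).image _)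
      rintro x ⟨ξ, hξ, rfl⟩
      have hgd : ∀ τ ∈ Set.Icc (0:ℝ) T₀, ∀ s ∈ Set.Icc (0:ℝ) L,
          |(c s * N s τ + α / 2 * c s ^ 2 * V s τ ^ 2) -
            (c s * N' s τ + α / 2 * c s ^ 2 * V' s τ ^ 2)|
            ≤ (Cc + α * Cc ^ 2 * R) * (SN τ + SV τ) := by
        intro τ hτ s hs
        obtain ⟨h1, h2, h3, h4⟩ := hRb s hs τ hτ
        exact BoussAux2.est2 hα (hCcb s hs) h2 h4 (hSNb τ hτ s hs) (hSVb τ hτ s hs)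
      have hkey := hest _ _ (Cc + α * Cc ^ 2 * R) (by positivity) hgVc hgV'c hgd ξ hξ
      have heV := (heqa ξ hξ u hu).2
      have heV' := (heqb ξ hξ u hu).2
      have hdec : V ξ u - V' ξ u = (V₀ ξ - V₀' ξ) +
          ((∫ τ in (0:ℝ)..u, ∫ s in (0:ℝ)..L,
              K ξ s * (c s * N s τ + α / 2 * c s ^ 2 * V s τ ^ 2)) -
           ∫ τ in (0:ℝ)..u, ∫ s in (0:ℝ)..L,
              K ξ s * (c s * N' s τ + α / 2 * c s ^ 2 * V' s τ ^ 2)) := by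
        rw [heV, heV']; ring
      calc |V ξ u - V' ξ u| ≤ |V₀ ξ - V₀' ξ| +
          |(∫ τ in (0:ℝ)..u, ∫ s in (0:ℝ)..L,
              K ξ s * (c s * N s τ + α / 2 * c s ^ 2 * V s τ ^ 2)) -
           ∫ τ in (0:ℝ)..u, ∫ s in (0:ℝ)..L,
              K ξ s * (c s * N' s τ + α / 2 * c s ^ 2 * V' s τ ^ 2)| := by
            rw [hdec]; exact abs_add_le _ _
        _ ≤ aV + 6 / β * (Cc + α * Cc ^ 2 * R) * L * ∫ τ in (0:ℝ)..u, (SN τ + SV τ) :=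
            add_le_add (haVb ξ hξ) hkey
    have hDQ : 6 / β * (1 + α * Cc ^ 2 * R) * L * (∫ τ in (0:ℝ)..u, (SN τ + SV τ)) +
        6 / β * (Cc + α * Cc ^ 2 * R) * L * (∫ τ in (0:ℝ)..u, (SN τ + SV τ)) =
        D * ∫ τ in (0:ℝ)..u, (SN τ + SV τ) := by
      rw [hD_def]; ring
    linarith only [hSNle, hSVle, hDQ]
  clear_value D aN aV SN SV
  -- Grönwall argument
  set cl : ℝ → ℝ := fun x => max 0 (min x T₀) with hcl_def
  have hclcont : Continuous cl := continuous_const.max (continuous_id.min continuous_const)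
  have hclmem : ∀ x, cl x ∈ Set.Icc (0:ℝ) T₀ := fun x =>
    ⟨le_max_left _ _, max_le hT₀0 (min_le_right _ _)⟩
  set φt : ℝ → ℝ := fun x => SN (cl x) + SV (cl x) with hφt_def
  have hφtcont : Continuous φt := (hSNc.add hSVc).comp_continuous hclcont hclmem
  have hφteq : ∀ x ∈ Set.Icc (0:ℝ) T₀, φt x = SN x + SV x := by
    intro x hx
    have : cl x = x := by
      rw [hcl_def]; dsimp only; rw [min_eq_left hx.2, max_eq_right hx.1]
    rw [hφt_def]; dsimp only; rw [this]
  have hφt0 : ∀ x, 0 ≤ φt x := fun x => hφ0 (cl x) (hclmem x)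
  set g : ℝ → ℝ := fun x => ∫ τ in (0:ℝ)..x, φt τ with hg_def
  have hgderiv : ∀ x : ℝ, HasDerivAt g (φt x) x := fun x =>
    intervalIntegral.integral_hasDerivAt_right (hφtcont.intervalIntegrable _ _)
      (hφtcont.stronglyMeasurable.stronglyMeasurableAtFilter) hφtcont.continuousAt
  have hgcont : Continuous g := by
    rw [continuous_iff_continuousAt]; exact fun x => (hgderiv x).continuousAt
  have hgint : ∀ x ∈ Set.Icc (0:ℝ) T₀, g x = ∫ τ in (0:ℝ)..x, (SN τ + SV τ) := by
    intro x hx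
    rw [hg_def]
    apply intervalIntegral.integral_congr
    intro τ hτ
    rw [Set.uIcc_of_le hx.1] at hτ
    exact hφteq τ ⟨hτ.1, hτ.2.trans hx.2⟩
  have hgnn : ∀ x ∈ Set.Icc (0:ℝ) T₀, 0 ≤ g x := fun x hx =>
    intervalIntegral.integral_nonneg hx.1 (fun τ _ => hφt0 τ)
  clear_value cl φt g
  have hbound : ∀ x ∈ Set.Ico (0:ℝ) T₀, ‖φt x‖ ≤ D * ‖g x‖ + (aN + aV) := by
    intro x hx
    have hxI : x ∈ Set.Icc (0:ℝ) T₀ := ⟨hx.1, hx.2.le⟩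
    rw [Real.norm_eq_abs, Real.norm_eq_abs, abs_of_nonneg (hφt0 x), abs_of_nonneg (hgnn x hxI),
      hφteq x hxI]
    have := main x hxI
    rw [← hgint x hxI] at this
    linarith only [this]
  have gron := norm_le_gronwallBound_of_norm_deriv_right_le (f := g) (f' := φt) (δ := 0)
      (K := D) (ε := aN + aV) (a := 0) (b := T₀) hgcont.continuousOn
      (fun x _ => (hgderiv x).hasDerivWithinAt) (by simp [hg_def]) hbound
  have hgb := gron t ht
  rw [gronwallBound_of_K_ne_0 hD.ne'] at hgb
  rw [Real.norm_eq_abs, sub_zero] at hgb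
  have h1 : g t ≤ 0 * Real.exp (D * t) + (aN + aV) / D * (Real.exp (D * t) - 1) :=
    (le_abs_self _).trans hgb
  have h2 := main t ht
  rw [← hgint t ht] at h2
  have h3 : D * ((aN + aV) / D) = aN + aV := by field_simp
  have hfin : SN t + SV t ≤ (aN + aV) * Real.exp (D * t) := by
    have h4 : D * g t ≤ (aN + aV) * (Real.exp (D * t) - 1) := by
      calc D * g t ≤ D * (0 * Real.exp (D * t) + (aN + aV) / D * (Real.exp (D * t) - 1)) :=
            mul_le_mul_of_nonneg_left h1 hD.le
        _ = (aN + aV) * (Real.exp (D * t) - 1) := by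
            rw [zero_mul, zero_add, ← mul_assoc, h3]
    linarith only [h2, h4]

  have e1 : sSup ((fun ξ => |N ξ t - N' ξ t|) '' Set.Icc (0:ℝ) L) = SN t := by rw [hSN_def]
  have e2 : sSup ((fun ξ => |V ξ t - V' ξ t|) '' Set.Icc (0:ℝ) L) = SV t := by rw [hSV_def]
  rw [e1, e2]
  exact hfin
end
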